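/- arXiv:1607.01396 — 11 statements merged into one kernel-verified Lean document; each statement's English description precedes it below -/
import Mathlib

section
/- Let Ξ be a finite abelian group and B : Ξ → Ξ → ℝ/ℤ a biadditive pairing which is symmetric (B x y = B y x for all x, y) or skew-symmetric (B x y = − B y x for all x, y), and let Ξ⊥ = {x ∈ Ξ | ∀ y, B x y = 0} be its radical. Then B descends to a well-defined biadditive pairing B' on the quotient group Ξ ⧸ Ξ⊥, and B' is perfect: the map from Ξ ⧸ Ξ⊥ to the group of additive homomorphisms (Ξ ⧸ Ξ⊥) →+ ℝ/ℤ sending a class c to B'(c, ·) is bijective. -/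
/-!
(Skew-)symmetry makes the left radical of `B` also its right radical, so `B` descends to the
quotient by the radical, where `c ↦ B'(c, ·)` is injective by construction. A finite abelian group
has exactly as many `ℝ/ℤ`-valued characters as elements (identify `ℝ/ℤ` with the unit circle and
count complex characters), so this injection is a bijection.
-/

/-- The radical of a biadditive pairing valued in `ℝ/ℤ`. -/
def pairingRadical {Ξ : Type*} [AddCommGroup Ξ] (B : Ξ → Ξ → AddCircle (1 : ℝ))
    (hadd1 : ∀ x x' y, B (x + x') y = B x y + B x' y) : AddSubgroup Ξ where
  carrier := {x | ∀ y, B x y = 0}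
  zero_mem' := by
    intro y
    have h := hadd1 0 0 y
    rw [add_zero] at h
    exact left_eq_add.mp h
  add_mem' := by
    intro a b ha hb y
    rw [hadd1 a b y, ha y, hb y, add_zero]
  neg_mem' := by
    intro a ha y
    have h0 : B 0 y = 0 := by
      have h := hadd1 0 0 y
      rw [add_zero] at h
      exact left_eq_add.mp h
    have h := hadd1 a (-a) y
    rw [add_neg_cancel, h0, ha y, zero_add] at h
    exact h.symm

namespace AddCircle

noncomputable def toCircleAddEquiv {T : ℝ} (hT : T ≠ 0) : AddCircle T ≃+ Additive Circle where
  toEquiv := (homeomorphCircle hT).toEquiv.trans Additive.ofMul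
  map_add' x y := by simp [homeomorphCircle_apply, toCircle_add]

end AddCircle

noncomputable def addMonoidHomAddCircleEquivAddChar (G : Type*) [AddCommGroup G] [Finite G]
    {T : ℝ} (hT : T ≠ 0) : (G →+ AddCircle T) ≃ AddChar G ℂ :=
  (AddCircle.toCircleAddEquiv hT).addMonoidHomCongrRightEquiv.trans <|
    AddChar.toAddMonoidHomEquiv.symm.trans AddChar.circleEquivComplex.toEquiv

instance finite_addMonoidHom_addCircle (G : Type*) [AddCommGroup G] [Finite G] {T : ℝ}
    [Fact (0 < T)] : Finite (G →+ AddCircle T) :=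
  .of_equiv _ (addMonoidHomAddCircleEquivAddChar G (Fact.out : 0 < T).ne').symm

lemma card_addMonoidHom_addCircle (G : Type*) [AddCommGroup G] [Finite G] {T : ℝ} (hT : T ≠ 0) :
    Nat.card (G →+ AddCircle T) = Nat.card G := by
  have := Fintype.ofFinite G
  rw [Nat.card_congr (addMonoidHomAddCircleEquivAddChar G hT), Nat.card_eq_fintype_card,
    AddChar.card_eq, Nat.card_eq_fintype_card]

namespace AddMonoidHom

variable {G A : Type*} [AddCommGroup G] [AddCommGroup A]
  (f : G →+ G →+ A) (hf : ∀ x ∈ f.ker, ∀ y, f y x = 0)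

def quotientKerPairing : G ⧸ f.ker →+ G ⧸ f.ker →+ A :=
  QuotientAddGroup.lift f.ker
    (mk' (fun y => QuotientAddGroup.lift f.ker (f y) (fun x hx => hf x hx y))
      (fun y y' => QuotientAddGroup.addMonoidHom_ext _ <| ext fun x => congr($(map_add f y y') x)))
    (fun _ hy => QuotientAddGroup.addMonoidHom_ext _ <| ext fun x => congr($hy x))

@[simp]
theorem quotientKerPairing_mk_mk (x y : G) : quotientKerPairing f hf x y = f x y :=
  rfl

theorem quotientKerPairing_injective : Function.Injective (quotientKerPairing f hf) := by
  refine (injective_iff_map_eq_zero _).2 fun c hc => ?_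
  induction c using QuotientAddGroup.induction_on with
  | H x =>
    rw [QuotientAddGroup.eq_zero_iff, mem_ker]
    ext y
    exact congr($hc y)

end AddMonoidHom

/-- A symmetric or skew-symmetric biadditive pairing on a finite abelian group descends to a
perfect biadditive pairing on the quotient by its radical. -/
theorem stmt0 {Ξ : Type*} [AddCommGroup Ξ] [Finite Ξ]
    (B : Ξ → Ξ → AddCircle (1 : ℝ))
    (hadd1 : ∀ x x' y, B (x + x') y = B x y + B x' y)
    (hadd2 : ∀ x y y', B x (y + y') = B x y + B x y')
    (hsym : (∀ x y, B x y = B y x) ∨ (∀ x y, B x y = - B y x)) :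
    ∃ Φ : Ξ ⧸ pairingRadical B hadd1 →+ ((Ξ ⧸ pairingRadical B hadd1) →+ AddCircle (1 : ℝ)),
      (∀ x y : Ξ, Φ (QuotientAddGroup.mk x) (QuotientAddGroup.mk y) = B x y) ∧
      Function.Bijective Φ := by
  let f : Ξ →+ Ξ →+ AddCircle (1 : ℝ) :=
    .mk' (fun x => .mk' (B x) (hadd2 x)) fun x x' => AddMonoidHom.ext (hadd1 x x')
  have hker : pairingRadical B hadd1 = f.ker := by
    ext x
    exact ⟨fun hx => AddMonoidHom.ext hx, fun hx y => congr($hx y)⟩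
  have hf : ∀ x ∈ f.ker, ∀ y, f y x = 0 := fun x hx y => by
    have hx : B x y = 0 := congr($hx y)
    change B y x = 0
    rcases hsym with h | h <;> simp [h y x, hx]
  rw [hker]
  refine ⟨f.quotientKerPairing hf, f.quotientKerPairing_mk_mk hf, ?_⟩
  exact (Nat.bijective_iff_injective_and_card _).2
    ⟨f.quotientKerPairing_injective hf, (card_addMonoidHom_addCircle _ one_ne_zero).symm⟩
end

section
/- Let Ξ be a finite abelian group in which every element satisfies x + x = 0, and let q : Ξ → ZMod 2 satisfy q(0) = 0 and be such that B(x,y) := q(x+y) + q(x) + q(y) is biadditive and perfect (the map Ξ → (Ξ →+ ZMod 2), x ↦ B x, is bijective). Let G := Σ_{x ∈ Ξ} ε(q(x)) ∈ ℤ, where ε : ZMod 2 → ℤ sends 0 to 1 and 1 to −1 (G is the Gauss sum whose sign is the Arf invariant of q). Then G > 0 if and only if there exists a subgroup L ≤ Ξ which is Lagrangian for B (L = {x ∈ Ξ | ∀ l ∈ L, B x l = 0}) and on which q vanishes identically. -/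
/-!
Summing `ε (q (x + l)) = ε (q x) ε (B x l)` over `l` in a subgroup `L` on which `q` vanishes and
using orthogonality of characters shows that the Gauss sum only sees `L^⊥`. If `L` is maximal
among such subgroups, `q = 1` on `L^⊥ \ L` (otherwise `L` could be enlarged by an element of
`L^⊥`), so the Gauss sum equals `2 |L| - |L^⊥|`. This is positive exactly when `L^⊥ = L`, since a
proper overgroup of `L` has at least twice its order; conversely a Lagrangian `L` on which `q`
vanishes already satisfies the hypotheses of this count, giving the Gauss sum `|L| > 0`.
-/

def signChar : AddChar (ZMod 2) ℤ where
  toFun a := if a = 0 then 1 else -1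
  map_zero_eq_one' := rfl
  map_add_eq_mul' := by decide

theorem signChar_apply (a : ZMod 2) : signChar a = if a = 0 then 1 else -1 :=
  rfl

theorem signChar_eq_one_iff (a : ZMod 2) : signChar a = 1 ↔ a = 0 := by
  revert a; decide

theorem sum_signChar_comp {A : Type*} [AddGroup A] [Fintype A] (f : A →+ ZMod 2)
    [Decidable (f = 0)] :
    ∑ a, signChar (f a) = if f = 0 then (Fintype.card A : ℤ) else 0 := by
  have hψ : signChar.compAddMonoidHom f = 0 ↔ f = 0 := by
    rw [AddChar.eq_zero_iff, DFunLike.ext_iff]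
    simp only [AddChar.compAddMonoidHom_apply, signChar_eq_one_iff, AddMonoidHom.zero_apply]
  have h := AddChar.sum_eq_ite (signChar.compAddMonoidHom f)
  simp only [AddChar.compAddMonoidHom_apply, hψ] at h
  convert h

theorem two_mul_card_le_card_of_lt {G : Type*} [AddGroup G] [Finite G] {H K : AddSubgroup G}
    (h : H < K) : 2 * Nat.card H ≤ Nat.card K := by
  obtain ⟨k, hk⟩ := AddSubgroup.card_dvd_of_le h.le
  have hk0 : k ≠ 0 := by
    rintro rfl
    exact Nat.card_pos.ne' (hk.trans (mul_zero _))
  have hk1 : k ≠ 1 := by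
    rintro rfl
    exact h.ne (AddSubgroup.eq_of_le_of_card_ge h.le (by rw [hk, mul_one]))
  rw [hk, mul_comm 2]
  exact Nat.mul_le_mul_left (Nat.card H) (show 2 ≤ k by omega)

def orthSubgroup {Ξ M : Type*} [AddCommGroup Ξ] [AddCommGroup M] (B : Ξ →+ Ξ →+ M)
    (L : AddSubgroup Ξ) : AddSubgroup Ξ where
  carrier := {x | ∀ l ∈ L, B x l = 0}
  zero_mem' := by simp
  add_mem' ha hb l hl := by simp [ha l hl, hb l hl]
  neg_mem' ha l hl := by simp [ha l hl]

theorem mem_orthSubgroup {Ξ M : Type*} [AddCommGroup Ξ] [AddCommGroup M] {B : Ξ →+ Ξ →+ M}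
    {L : AddSubgroup Ξ} {x : Ξ} : x ∈ orthSubgroup B L ↔ ∀ l ∈ L, B x l = 0 :=
  Iff.rfl

section QuadraticRefinement

variable {Ξ : Type*} [AddCommGroup Ξ] {q : Ξ → ZMod 2} {B : Ξ →+ Ξ →+ ZMod 2}

theorem map_zero_of_polar (hq : ∀ x y, q (x + y) = q x + q y + B x y) : q 0 = 0 := by
  simpa using hq 0 0

theorem polar_comm (hq : ∀ x y, q (x + y) = q x + q y + B x y) (x y : Ξ) : B x y = B y x := by
  have h := hq x y
  rw [add_comm x y, hq y x, add_comm (q y)] at h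
  exact (add_left_cancel h).symm

theorem le_orthSubgroup (hq : ∀ x y, q (x + y) = q x + q y + B x y) {L : AddSubgroup Ξ}
    (hL : ∀ l ∈ L, q l = 0) : L ≤ orthSubgroup B L := fun x hx l hl => by
  simpa [hL x hx, hL l hl, hL _ (L.add_mem hx hl), eq_comm] using hq x l

theorem map_zsmul_eq_zero (h2 : ∀ x : Ξ, x + x = 0)
    (hq : ∀ x y, q (x + y) = q x + q y + B x y) {y : Ξ} (hy : q y = 0) (k : ℤ) :
    q (k • y) = 0 := by
  obtain ⟨m, rfl | rfl⟩ := Int.even_or_odd' k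
  · rw [mul_comm, mul_zsmul, two_zsmul, h2, zsmul_zero, map_zero_of_polar hq]
  · rw [add_zsmul, one_zsmul, mul_comm, mul_zsmul, two_zsmul, h2, zsmul_zero, zero_add, hy]

theorem mem_of_maximal_of_mem_orthSubgroup (h2 : ∀ x : Ξ, x + x = 0)
    (hq : ∀ x y, q (x + y) = q x + q y + B x y) {L : AddSubgroup Ξ}
    (hL : Maximal (fun L : AddSubgroup Ξ => ∀ l ∈ L, q l = 0) L) {y : Ξ}
    (hy : y ∈ orthSubgroup B L) (hqy : q y = 0) : y ∈ L := by
  have hsup : ∀ z ∈ L ⊔ AddSubgroup.zmultiples y, q z = 0 := by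
    intro z hz
    obtain ⟨a, ha, b, hb, rfl⟩ := AddSubgroup.mem_sup.1 hz
    obtain ⟨k, rfl⟩ := AddSubgroup.mem_zmultiples_iff.1 hb
    rw [hq, hL.prop a ha, map_zsmul_eq_zero h2 hq hqy, map_zsmul, polar_comm hq,
      hy a ha, smul_zero, add_zero, add_zero]
  rw [hL.eq_of_le hsup le_sup_left]
  exact AddSubgroup.mem_sup_right (AddSubgroup.mem_zmultiples y)

variable [Fintype Ξ]

open scoped Classical in
theorem sum_signChar_eq_sum_orthSubgroup (hq : ∀ x y, q (x + y) = q x + q y + B x y)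
    {L : AddSubgroup Ξ} (hL : ∀ l ∈ L, q l = 0) :
    ∑ x, signChar (q x) = ∑ x, if x ∈ orthSubgroup B L then signChar (q x) else 0 := by
  have hchar (x : Ξ) : ∑ l : L, signChar (B x l) =
      if x ∈ orthSubgroup B L then (Fintype.card L : ℤ) else 0 := by
    have h := sum_signChar_comp ((B x).comp L.subtype)
    simp only [AddMonoidHom.comp_apply, AddSubgroup.coe_subtype] at h
    rw [h]
    congr 1
    simp only [DFunLike.ext_iff, AddMonoidHom.comp_apply, AddSubgroup.coe_subtype,
      AddMonoidHom.zero_apply, Subtype.forall, mem_orthSubgroup]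
  apply mul_left_cancel₀ (Nat.cast_ne_zero.2 (Fintype.card_pos (α := L)).ne')
  calc (Fintype.card L : ℤ) * ∑ x, signChar (q x)
      = ∑ _l : L, ∑ x, signChar (q x) := by
        rw [Finset.sum_const, Finset.card_univ, nsmul_eq_mul]
    _ = ∑ l : L, ∑ x, signChar (q (x + l)) :=
        Finset.sum_congr rfl fun l _ => (Equiv.sum_comp (Equiv.addRight (l : Ξ)) _).symm
    _ = ∑ x, signChar (q x) * ∑ l : L, signChar (B x l) := by
        rw [Finset.sum_comm]
        refine Finset.sum_congr rfl fun x _ => ?_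
        rw [Finset.mul_sum]
        refine Finset.sum_congr rfl fun l _ => ?_
        rw [hq, hL l l.2, add_zero, AddChar.map_add_eq_mul]
    _ = (Fintype.card L : ℤ) * ∑ x, if x ∈ orthSubgroup B L then signChar (q x) else 0 := by
        rw [Finset.mul_sum]
        refine Finset.sum_congr rfl fun x _ => ?_
        rw [hchar]
        split_ifs <;> ring

theorem sum_signChar_eq_two_mul_card_sub_card (hq : ∀ x y, q (x + y) = q x + q y + B x y)
    {L : AddSubgroup Ξ} (hL : ∀ l ∈ L, q l = 0)
    (hmem : ∀ y ∈ orthSubgroup B L, q y = 0 → y ∈ L) :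
    ∑ x, signChar (q x) = 2 * Nat.card L - Nat.card (orthSubgroup B L) := by
  classical
  have hpt (x : Ξ) : (if x ∈ orthSubgroup B L then signChar (q x) else 0) =
      2 * (if x ∈ L then 1 else 0) - (if x ∈ orthSubgroup B L then 1 else 0) := by
    by_cases hxL : x ∈ L
    · simp [hxL, le_orthSubgroup hq hL hxL, hL x hxL]
    · by_cases hx : x ∈ orthSubgroup B L
      · have hqx : q x ≠ 0 := fun h => hxL (hmem x hx h)
        simp [hx, hxL, signChar_apply, hqx]
      · simp [hx, hxL]
  rw [sum_signChar_eq_sum_orthSubgroup hq hL, Finset.sum_congr rfl fun x _ => hpt x,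
    Finset.sum_sub_distrib, ← Finset.mul_sum, Finset.sum_boole, Finset.sum_boole,
    Nat.card_eq_fintype_card, Nat.card_eq_fintype_card, Fintype.card_subtype,
    Fintype.card_subtype]

end QuadraticRefinement

theorem stmt5_general {Ξ : Type*} [AddCommGroup Ξ] [Fintype Ξ]
    (h2 : ∀ x : Ξ, x + x = 0)
    (q : Ξ → ZMod 2)
    (B : Ξ →+ Ξ →+ ZMod 2)
    (hBdef : ∀ x y : Ξ, B x y = q (x + y) + q x + q y) :
    0 < (∑ x : Ξ, if q x = 0 then (1 : ℤ) else -1) ↔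
      ∃ L : AddSubgroup Ξ, (∀ x : Ξ, x ∈ L ↔ ∀ l ∈ L, B x l = 0) ∧ (∀ l ∈ L, q l = 0) := by
  have hq : ∀ x y, q (x + y) = q x + q y + B x y := fun x y => by
    rw [hBdef]; grind
  change 0 < ∑ x, signChar (q x) ↔ _
  constructor
  · intro hpos
    obtain ⟨L, -, hL⟩ := Finite.exists_le_maximal
      (p := fun L : AddSubgroup Ξ => ∀ l ∈ L, q l = 0) (a := ⊥) (by simp [map_zero_of_polar hq])
    have horth : orthSubgroup B L = L := by
      by_contra hne
      have hcard := two_mul_card_le_card_of_lt ((le_orthSubgroup hq hL.prop).lt_of_ne' hne)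
      rw [sum_signChar_eq_two_mul_card_sub_card hq hL.prop
        fun y hy => mem_of_maximal_of_mem_orthSubgroup h2 hq hL hy] at hpos
      omega
    exact ⟨L, fun x => (SetLike.ext_iff.1 horth x).symm, hL.prop⟩
  · rintro ⟨L, hLag, hL⟩
    have horth : orthSubgroup B L = L := SetLike.ext fun x => (hLag x).symm
    rw [sum_signChar_eq_two_mul_card_sub_card hq hL fun y hy _ => horth ▸ hy, horth]
    have := Nat.card_pos (α := L)
    omega

/-- For a `ZMod 2`-valued quadratic refinement `q` of a perfect biadditive pairing `B` on a finite
abelian 2-torsion group, the Gauss sum `∑ x, ε (q x)` is positive if and only if there is a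
Lagrangian subgroup of `B` on which `q` vanishes identically. -/
theorem stmt5 {Ξ : Type*} [AddCommGroup Ξ] [Fintype Ξ]
    (h2 : ∀ x : Ξ, x + x = 0)
    (q : Ξ → ZMod 2) (hq0 : q 0 = 0)
    (B : Ξ →+ Ξ →+ ZMod 2)
    (hBdef : ∀ x y : Ξ, B x y = q (x + y) + q x + q y)
    (hperf : Function.Bijective ⇑B) :
    0 < (∑ x : Ξ, if q x = 0 then (1 : ℤ) else -1) ↔
      ∃ L : AddSubgroup Ξ, (∀ x : Ξ, x ∈ L ↔ ∀ l ∈ L, B x l = 0) ∧ (∀ l ∈ L, q l = 0) :=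
  stmt5_general h2 q B hBdef
end

section
/- Let Ξ be a finite abelian group in which every element satisfies x + x = 0, and let q : Ξ → ZMod 2 satisfy q(0) = 0 and be such that B(x,y) := q(x+y) + q(x) + q(y) is biadditive and perfect. Define q₀₀, q₁₁ : ZMod 2 × ZMod 2 → ZMod 2 by q₀₀(a,b) = a·b and q₁₁(a,b) = a + b + a·b. Then there exist n : ℕ and an additive isomorphism e : Ξ ≃ (Fin n → ZMod 2 × ZMod 2) such that either q(x) = Σ_{i} q₀₀(e x i) for all x ∈ Ξ, or n ≥ 1 and q(x) = q₁₁(e x 0) + Σ_{i ≠ 0} q₀₀(e x i) for all x ∈ Ξ. (The first case is the Arf invariant 0 case, the second the Arf invariant 1 case.) -/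
namespace Stmt6Aux

abbrev Pl : Type := ZMod 2 × ZMod 2

def q00 (p : Pl) : ZMod 2 := p.1 * p.2
def q11 (p : Pl) : ZMod 2 := p.1 + p.2 + p.1 * p.2

lemma two : ∀ c : ZMod 2, c = 0 ∨ c = 1 := by decide

def sm {Ξ : Type*} [AddCommGroup Ξ] (c : ZMod 2) (v : Ξ) : Ξ := if c = 0 then 0 else v

@[simp] lemma sm_zero {Ξ : Type*} [AddCommGroup Ξ] (v : Ξ) : sm (0 : ZMod 2) v = 0 := rfl
@[simp] lemma sm_one {Ξ : Type*} [AddCommGroup Ξ] (v : Ξ) : sm (1 : ZMod 2) v = v := by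
  simp [sm]

def consAE (M : Type*) [AddCommMonoid M] (n : ℕ) : (M × (Fin n → M)) ≃+ (Fin (n+1) → M) where
  toFun p := Fin.cons p.1 p.2
  invFun f := (f 0, fun i => f i.succ)
  left_inv p := by simp
  right_inv f := by
    funext i
    cases i using Fin.cases <;> simp
  map_add' p q := by
    funext i
    cases i using Fin.cases <;> simp

@[simp] lemma consAE_apply {M : Type*} [AddCommMonoid M] {n : ℕ} (p : M × (Fin n → M)) :
    consAE M n p = Fin.cons p.1 p.2 := rfl

@[simp] lemma consAE_symm_apply {M : Type*} [AddCommMonoid M] {n : ℕ} (f : Fin (n+1) → M) :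
    (consAE M n).symm f = (f 0, fun i => f i.succ) := rfl

def swap12 (M F : Type*) [AddCommMonoid M] [AddCommMonoid F] :
    (M × (M × F)) ≃+ (M × (M × F)) where
  toFun p := (p.2.1, (p.1, p.2.2))
  invFun p := (p.2.1, (p.1, p.2.2))
  left_inv _ := rfl
  right_inv _ := rfl
  map_add' _ _ := rfl

@[simp] lemma swap12_apply {M F : Type*} [AddCommMonoid M] [AddCommMonoid F]
    (p : M × (M × F)) : swap12 M F p = (p.2.1, (p.1, p.2.2)) := rfl

def TA : (Pl × Pl) ≃+ (Pl × Pl) where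
  toFun p := ((p.1.2 + p.2.1, p.1.2 + p.2.2),
              (p.1.1 + p.1.2 + p.2.1 + p.2.2, p.1.1 + p.2.1 + p.2.2))
  invFun p := ((p.1.1 + p.1.2 + p.2.2, p.2.1 + p.2.2),
               (p.1.1 + p.2.1 + p.2.2, p.1.2 + p.2.1 + p.2.2))
  left_inv := by decide
  right_inv := by decide
  map_add' p q := by
    refine Prod.ext (Prod.ext ?_ ?_) (Prod.ext ?_ ?_) <;> simp <;> ring

lemma Tq (p : Pl × Pl) : q11 p.1 + q11 p.2 = q00 (TA p).1 + q00 (TA p).2 := by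
  revert p; decide

def applyT (F : Type*) [AddCommMonoid F] : (Pl × (Pl × F)) ≃+ (Pl × (Pl × F)) :=
  (AddEquiv.prodAssoc).symm.trans ((TA.prodCongr (AddEquiv.refl F)).trans AddEquiv.prodAssoc)

@[simp] lemma applyT_apply {F : Type*} [AddCommMonoid F] (p : Pl × (Pl × F)) :
    applyT F p = ((TA (p.1, p.2.1)).1, ((TA (p.1, p.2.1)).2, p.2.2)) := rfl

lemma sum_erase_zero {n : ℕ} (f : Fin (n+1) → ZMod 2) :
    ∑ i ∈ Finset.univ.erase (0 : Fin (n+1)), f i = ∑ j : Fin n, f j.succ := by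
  have h1 : f 0 + ∑ i ∈ Finset.univ.erase (0 : Fin (n+1)), f i = ∑ i, f i :=
    Finset.add_sum_erase _ f (Finset.mem_univ 0)
  have h2 : ∑ i, f i = f 0 + ∑ j : Fin n, f j.succ := Fin.sum_univ_succ f
  rw [h2] at h1
  exact add_left_cancel h1

@[simp] lemma prodCongr_apply {M N M' N' : Type*} [AddZeroClass M] [AddZeroClass N]
    [AddZeroClass M'] [AddZeroClass N'] (f : M ≃+ M') (g : N ≃+ N') (p : M × N) :
    f.prodCongr g p = (f p.1, g p.2) := rfl

universe u

theorem key : ∀ (N : ℕ) (Ξ : Type u) [AddCommGroup Ξ] [Fintype Ξ],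
    Fintype.card Ξ ≤ N → (∀ x : Ξ, x + x = 0) → ∀ (q : Ξ → ZMod 2), q 0 = 0 →
    ∀ (B : Ξ →+ Ξ →+ ZMod 2), (∀ x y : Ξ, B x y = q (x + y) + q x + q y) →
    Function.Bijective ⇑B →
    ∃ (n : ℕ) (e : Ξ ≃+ (Fin n → Pl)),
      (∀ x : Ξ, q x = ∑ i : Fin n, q00 (e x i)) ∨
      (∃ h : 0 < n, ∀ x : Ξ,
        q x = q11 (e x ⟨0, h⟩) + ∑ i ∈ Finset.univ.erase (⟨0, h⟩ : Fin n), q00 (e x i)) := by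
  intro N
  induction N using Nat.strong_induction_on with
  | _ N IH =>
  intro Ξ _ _ hcard h2 q hq0 B hBdef hperf
  have addself : ∀ c : ZMod 2, c + c = 0 := by decide
  have hBsymm : ∀ u v : Ξ, B u v = B v u := by
    intro u v; rw [hBdef, hBdef, add_comm u v]; ring
  have hBself : ∀ u : Ξ, B u u = 0 := by
    intro u; rw [hBdef, h2 u, hq0, zero_add]; exact addself _
  have q_add : ∀ u v : Ξ, q (u + v) = B u v + q u + q v := by
    have aux : ∀ x y z w : ZMod 2, x = y + z + w → y = x + z + w := by decide
    intro u v; exact aux _ _ _ _ (hBdef u v)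
  by_cases hs : ∀ x : Ξ, x = 0
  · refine ⟨0, ⟨⟨fun _ => 0, fun _ => 0, fun x => (hs x).symm,
      fun f => funext fun i => i.elim0⟩, fun _ _ => by simp⟩, Or.inl fun x => ?_⟩
    rw [hs x, hq0]; simp
  push_neg at hs
  obtain ⟨x, hx0⟩ := hs
  obtain ⟨y, hxy⟩ : ∃ y, B x y = 1 := by
    by_contra h
    push_neg at h
    have hBx : B x = 0 := by
      ext y
      rcases two (B x y) with h0 | h1
      · simpa using h0
      · exact absurd h1 (h y)
    exact hx0 (hperf.injective (by rw [hBx, map_zero]))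
  obtain ⟨a, b, hab, hqab⟩ : ∃ a b : Ξ, B a b = 1 ∧ q a = q b := by
    by_cases h : q x = q y
    · exact ⟨x, y, hxy, h⟩
    · have hxy0 : q (x + y) = 0 := by
        rw [q_add, hxy]
        revert h; generalize q x = u; generalize q y = v
        revert u v; decide
      by_cases hx : q x = 0
      · refine ⟨x, x + y, ?_, by rw [hx, hxy0]⟩
        rw [map_add, hBself, hxy, zero_add]
      · have hy : q y = 0 := by
          revert h hx; generalize q x = u; generalize q y = v
          revert u v; decide
        refine ⟨y, x + y, ?_, by rw [hy, hxy0]⟩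
        rw [map_add, hBsymm y x, hxy, hBself, add_zero]
  have Bba : B b a = 1 := by rw [hBsymm]; exact hab
  have Baa := hBself a
  have Bbb := hBself b
  have smB : ∀ (u : Ξ) (c : ZMod 2) (v : Ξ), B u (sm c v) = c * B u v := by
    intro u c v
    rcases two c with rfl | rfl <;> simp
  have smB' : ∀ (c : ZMod 2) (v u : Ξ), B (sm c v) u = c * B v u := by
    intro c v u
    rcases two c with rfl | rfl <;> simp
  have sm_addc : ∀ (c d : ZMod 2) (v : Ξ), sm (c + d) v = sm c v + sm d v := by
    intro c d v
    have h11 : (1 + 1 : ZMod 2) = 0 := by decide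
    rcases two c with rfl | rfl <;> rcases two d with rfl | rfl <;>
      simp [h11, (h2 v).symm]
  let W : AddSubgroup Ξ :=
    { carrier := {z | B a z = 0 ∧ B b z = 0}
      zero_mem' := by simp
      add_mem' := by
        intro u v hu hv
        exact ⟨by rw [map_add, hu.1, hv.1, add_zero],
               by rw [map_add, hu.2, hv.2, add_zero]⟩
      neg_mem' := by
        intro u hu
        exact ⟨by rw [map_neg, hu.1, neg_zero], by rw [map_neg, hu.2, neg_zero]⟩ }
  have hρW : ∀ z : Ξ, z + sm (B b z) a + sm (B a z) b ∈ W := by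
    intro z
    constructor
    · rw [map_add, map_add, smB, smB, Baa, hab, mul_zero, mul_one, add_zero]
      exact addself _
    · rw [map_add, map_add, smB, smB, Bba, Bbb, mul_one, mul_zero, add_zero]
      exact addself _
  have cancel : ∀ u v z : Ξ, u + v + (z + u + v) = z := by
    intro u v z
    have h : u + v + (z + u + v) = z + (u + u) + (v + v) := by abel
    rw [h, h2, h2, add_zero, add_zero]
  let E1 : Ξ ≃+ Pl × W :=
    { toFun := fun z => ((B b z, B a z), ⟨z + sm (B b z) a + sm (B a z) b, hρW z⟩)
      invFun := fun p => sm p.1.1 a + sm p.1.2 b + (p.2 : Ξ)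
      left_inv := fun z => cancel _ _ _
      right_inv := by
        rintro ⟨⟨α, β⟩, w, hw1, hw2⟩
        have hb : B b (sm α a + sm β b + w) = α := by
          rw [map_add, map_add, smB, smB, Bba, Bbb, hw2, mul_one, mul_zero, add_zero, add_zero]
        have ha : B a (sm α a + sm β b + w) = β := by
          rw [map_add, map_add, smB, smB, Baa, hab, hw1, mul_zero, mul_one, zero_add, add_zero]
        refine Prod.ext (Prod.ext ?_ ?_) (Subtype.ext ?_) <;> dsimp only
        · exact hb
        · exact ha
        · rw [hb, ha]
          have h : ∀ u v w : Ξ, (u + v + w) + u + v = w := by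
            intro u v w
            have hh : (u + v + w) + u + v = w + (u + u) + (v + v) := by abel
            rw [hh, h2, h2, add_zero, add_zero]
          exact h _ _ _
      map_add' := by
        intro z z'
        refine Prod.ext (Prod.ext ?_ ?_) (Subtype.ext ?_) <;> dsimp only
        · exact map_add _ _ _
        · exact map_add _ _ _
        · simp only [Prod.snd_add, AddSubgroup.coe_add]
          rw [map_add (B b), map_add (B a), sm_addc, sm_addc]
          abel }
  have hE1fst : ∀ z : Ξ, (E1 z).1 = (B b z, B a z) := fun _ => rfl
  have E1snd : ∀ z : Ξ, ((E1 z).2 : Ξ) = z + sm (B b z) a + sm (B a z) b := fun _ => rfl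
  have qsm : ∀ α β : ZMod 2, q (sm α a + sm β b) = q a * α + q a * β + α * β := by
    intro α β
    rcases two α with rfl | rfl <;> rcases two β with rfl | rfl
    · simpa using hq0
    · simp [hqab.symm]
    · simp
    · rw [sm_one, sm_one, q_add, hab, ← hqab]
      have h' : ∀ c : ZMod 2, 1 + c + c = c * 1 + c * 1 + 1 * 1 := by decide
      exact h' _
  have qdecomp : ∀ z : Ξ,
      q z = (q a * B b z + q a * B a z + B b z * B a z) + q ((E1 z).2 : Ξ) := by
    intro z
    have hz : z = (sm (B b z) a + sm (B a z) b) + ((E1 z).2 : Ξ) := by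
      rw [E1snd]; exact (cancel _ _ _).symm
    have h1 : q z = B (sm (B b z) a + sm (B a z) b) ((E1 z).2 : Ξ)
        + q (sm (B b z) a + sm (B a z) b) + q ((E1 z).2 : Ξ) := by
      conv_lhs => rw [hz]
      exact q_add _ _
    have hw := hρW z
    have hBw : B (sm (B b z) a + sm (B a z) b) ((E1 z).2 : Ξ) = 0 := by
      rw [map_add B, AddMonoidHom.add_apply, smB', smB', E1snd, hw.1, hw.2,
        mul_zero, mul_zero, add_zero]
    rw [h1, hBw, zero_add, qsm]
  have hE1a0 : (E1 a).2 = 0 := by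
    apply Subtype.ext
    rw [E1snd, Bba, Baa, sm_one, sm_zero, add_zero]
    exact h2 a
  have hE1b0 : (E1 b).2 = 0 := by
    apply Subtype.ext
    rw [E1snd, Bbb, hab, sm_zero, sm_one, add_zero]
    exact h2 b
  have hE1w : ∀ w : W, (E1 (w : Ξ)).2 = w := by
    intro w
    apply Subtype.ext
    rw [E1snd, w.2.1, w.2.2, sm_zero, sm_zero, add_zero, add_zero]
  let B' : W →+ W →+ ZMod 2 := AddMonoidHom.mk' (fun w : W => (B (w : Ξ)).comp W.subtype)
    (by intro u v; ext w; simp [map_add])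
  have hB'def : ∀ u v : W, B' u v = q ((u + v : W) : Ξ) + q (u : Ξ) + q (v : Ξ) :=
    fun u v => hBdef (u : Ξ) (v : Ξ)
  have hB'inj : Function.Injective ⇑B' := by
    rw [injective_iff_map_eq_zero]
    intro u hu
    have huz : ∀ z : Ξ, B (u : Ξ) z = 0 := by
      intro z
      have hz : z = (sm (B b z) a + sm (B a z) b) + ((E1 z).2 : Ξ) := by
        rw [E1snd]; exact (cancel _ _ _).symm
      have h3 : B (u : Ξ) ((E1 z).2 : Ξ) = 0 := by
        have h4 := DFunLike.congr_fun hu ((E1 z).2)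
        rw [AddMonoidHom.zero_apply] at h4
        exact h4
      have h1 : B (u : Ξ) a = 0 := by rw [hBsymm]; exact u.2.1
      have h2' : B (u : Ξ) b = 0 := by rw [hBsymm]; exact u.2.2
      conv_lhs => rw [hz]
      rw [map_add, map_add, smB, smB, h3, h1, h2', mul_zero, mul_zero,
        add_zero, add_zero]
    have hu0 : (u : Ξ) = 0 := by
      apply hperf.injective
      ext z
      rw [huz z, map_zero]
      simp
    exact Subtype.ext hu0
  have hB'surj : Function.Surjective ⇑B' := by
    intro f
    obtain ⟨u, hu⟩ := hperf.surjective
      (f.comp ((AddMonoidHom.snd Pl W).comp E1.toAddMonoidHom))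
    have happ : ∀ z : Ξ, B u z = f (E1 z).2 := fun z => DFunLike.congr_fun hu z
    have hua : B a u = 0 := by rw [hBsymm, happ, hE1a0, map_zero]
    have hub : B b u = 0 := by rw [hBsymm, happ, hE1b0, map_zero]
    refine ⟨⟨u, hua, hub⟩, ?_⟩
    ext w
    show B u (w : Ξ) = f w
    rw [happ, hE1w]
  haveI : Fintype W := Fintype.ofFinite _
  have h4 : Fintype.card Pl = 4 := by simp
  have hcardΞ : Fintype.card Ξ = 4 * Fintype.card W := by
    rw [Fintype.card_congr E1.toEquiv, Fintype.card_prod, h4]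
  have hWlt : Fintype.card W < N := by
    have h1 : 1 ≤ Fintype.card W := Fintype.card_pos
    omega
  obtain ⟨n', e', hc⟩ := IH (Fintype.card W) hWlt W le_rfl
    (fun w => Subtype.ext (h2 (w : Ξ))) (fun w : W => q (w : Ξ)) hq0 B' hB'def
    ⟨hB'inj, hB'surj⟩
  rcases hc with hsum | ⟨hn', hsum⟩
  · -- W has Arf invariant 0
    rcases two (q a) with hε | hε
    · -- hyperbolic new plane
      refine ⟨n' + 1,
        (E1.trans (AddEquiv.prodCongr (AddEquiv.refl Pl) e')).trans (consAE Pl n'),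
        Or.inl fun z => ?_⟩
      rw [qdecomp z, hε, hsum ((E1 z).2)]
      simp only [AddEquiv.trans_apply, prodCongr_apply, AddEquiv.coe_refl,
        Prod.map, id, hE1fst, consAE_apply, Fin.sum_univ_succ, Fin.cons_zero,
        Fin.cons_succ, q00]
      ring
    · -- elliptic new plane
      refine ⟨n' + 1,
        (E1.trans (AddEquiv.prodCongr (AddEquiv.refl Pl) e')).trans (consAE Pl n'),
        Or.inr ⟨Nat.succ_pos n', fun z => ?_⟩⟩
      have h0 : (⟨0, Nat.succ_pos n'⟩ : Fin (n'+1)) = 0 := by ext; simp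
      rw [h0, sum_erase_zero]
      rw [qdecomp z, hε, hsum ((E1 z).2)]
      simp only [AddEquiv.trans_apply, prodCongr_apply, AddEquiv.coe_refl,
        Prod.map, id, hE1fst, consAE_apply, Fin.sum_univ_succ, Fin.cons_zero,
        Fin.cons_succ, q00, q11]
      ring
  · -- W has Arf invariant 1
    obtain ⟨m, rfl⟩ : ∃ m, n' = m + 1 := ⟨n' - 1, by omega⟩
    have h0' : (⟨0, hn'⟩ : Fin (m+1)) = 0 := by ext; simp
    simp only [h0', sum_erase_zero] at hsum
    rcases two (q a) with hε | hε
    · -- hyperbolic new plane : total Arf 1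
      refine ⟨m + 2,
        (((E1.trans (AddEquiv.prodCongr (AddEquiv.refl Pl) (e'.trans (consAE Pl m).symm))).trans
          (swap12 Pl (Fin m → Pl))).trans
          (AddEquiv.prodCongr (AddEquiv.refl Pl) (consAE Pl m))).trans (consAE Pl (m+1)),
        Or.inr ⟨Nat.succ_pos (m+1), fun z => ?_⟩⟩
      have h0 : (⟨0, Nat.succ_pos (m+1)⟩ : Fin (m+2)) = 0 := by ext; simp
      rw [h0, sum_erase_zero]
      rw [qdecomp z, hε, hsum ((E1 z).2)]
      simp only [AddEquiv.trans_apply, prodCongr_apply, AddEquiv.coe_refl,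
        Prod.map, id, hE1fst, consAE_apply, consAE_symm_apply, swap12_apply,
        Fin.sum_univ_succ, Fin.cons_zero, Fin.cons_succ, q00, q11]
      ring
    · -- elliptic new plane : total Arf 0, via the E ⊕ E = H ⊕ H change of basis
      refine ⟨m + 2,
        (((E1.trans (AddEquiv.prodCongr (AddEquiv.refl Pl) (e'.trans (consAE Pl m).symm))).trans
          (applyT (Fin m → Pl))).trans
          (AddEquiv.prodCongr (AddEquiv.refl Pl) (consAE Pl m))).trans (consAE Pl (m+1)),
        Or.inl fun z => ?_⟩
      rw [qdecomp z, hε, hsum ((E1 z).2)]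
      have htq := Tq ((B b z, B a z), e' (E1 z).2 0)
      simp only [q00, q11] at htq
      simp only [AddEquiv.trans_apply, prodCongr_apply, AddEquiv.coe_refl,
        Prod.map, id, hE1fst, consAE_apply, consAE_symm_apply, applyT_apply,
        Fin.sum_univ_succ, Fin.cons_zero, Fin.cons_succ, q00, q11]
      linear_combination htq

end Stmt6Aux

/-- Classification of `ZMod 2`-valued quadratic refinements of perfect pairings on finite abelian
2-torsion groups: such a group with quadratic function is a direct sum of hyperbolic planes
(Arf invariant 0), or of one elliptic plane and hyperbolic planes (Arf invariant 1). -/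
theorem stmt6 {Ξ : Type*} [AddCommGroup Ξ] [Fintype Ξ]
    (h2 : ∀ x : Ξ, x + x = 0)
    (q : Ξ → ZMod 2) (hq0 : q 0 = 0)
    (B : Ξ →+ Ξ →+ ZMod 2)
    (hBdef : ∀ x y : Ξ, B x y = q (x + y) + q x + q y)
    (hperf : Function.Bijective ⇑B) :
    ∃ (n : ℕ) (e : Ξ ≃+ (Fin n → ZMod 2 × ZMod 2)),
      (∀ x : Ξ, q x = ∑ i : Fin n, (e x i).1 * (e x i).2) ∨
      (∃ h : 0 < n, ∀ x : Ξ,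
        q x = ((e x ⟨0, h⟩).1 + (e x ⟨0, h⟩).2 + (e x ⟨0, h⟩).1 * (e x ⟨0, h⟩).2)
          + ∑ i ∈ Finset.univ.erase (⟨0, h⟩ : Fin n), (e x i).1 * (e x i).2) := by
  obtain ⟨n, e, h⟩ := Stmt6Aux.key (Fintype.card Ξ) Ξ le_rfl h2 q hq0 B hBdef hperf
  rcases h with h | ⟨hn, h⟩
  · exact ⟨n, e, Or.inl h⟩
  · exact ⟨n, e, Or.inr ⟨hn, h⟩⟩
end

section
/- Let A, E, D be finite abelian groups, and let ρ : A →+ E and ε : E →+ D be additive homomorphisms with range ρ = ker ε. Let I : E → E → ℝ/ℤ be a biadditive skew-symmetric pairing (I x y = − I y x), and let ⟨·,·⟩ : A → D → ℝ/ℤ be a biadditive pairing such that the map D → (A →+ ℝ/ℤ), d ↦ ⟨·, d⟩, is injective, and suppose I (ρ a) y = ⟨a, ε y⟩ for all a ∈ A and y ∈ E. Then the image of ρ is a Lagrangian subgroup of E with respect to I: range ρ = {y ∈ E | ∀ a ∈ A, I (ρ a) y = 0}. -/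
/-- If `ρ : A →+ E` and `ε : E →+ D` satisfy `range ρ = ker ε`, `I` is a skew-symmetric biadditive
pairing on `E`, `⟨·,·⟩ : A → D → ℝ/ℤ` is biadditive with `d ↦ ⟨·, d⟩` injective, and
`I (ρ a) y = ⟨a, ε y⟩`, then the image of `ρ` is Lagrangian for `I`. -/
theorem stmt8 {A E D : Type*} [AddCommGroup A] [AddCommGroup E] [AddCommGroup D]
    [Finite A] [Finite E] [Finite D]
    (ρ : A →+ E) (ε : E →+ D) (hexact : ρ.range = ε.ker)
    (I : E → E → AddCircle (1 : ℝ))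
    (hI1 : ∀ x x' y, I (x + x') y = I x y + I x' y)
    (hI2 : ∀ x y y', I x (y + y') = I x y + I x y')
    (hskew : ∀ x y, I x y = - I y x)
    (P : A → D → AddCircle (1 : ℝ))
    (hP1 : ∀ a a' d, P (a + a') d = P a d + P a' d)
    (hP2 : ∀ a d d', P a (d + d') = P a d + P a d')
    (hinj : ∀ d d' : D, (∀ a : A, P a d = P a d') → d = d')
    (hcomp : ∀ (a : A) (y : E), I (ρ a) y = P a (ε y)) :
    ∀ y : E, y ∈ ρ.range ↔ ∀ a : A, I (ρ a) y = 0 := by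
  have hP0 : ∀ a : A, P a 0 = 0 := by
    intro a
    have h := hP2 a 0 0
    simpa using h.symm
  intro y
  constructor
  · rintro ⟨b, rfl⟩ a
    have hb : ε (ρ b) = 0 := by
      have : ρ b ∈ ε.ker := hexact ▸ AddMonoidHom.mem_range.2 ⟨b, rfl⟩
      exact this
    rw [hcomp, hb, hP0]
  · intro h
    have hy : ε y = 0 := by
      apply hinj
      intro a
      rw [hP0, ← hcomp]
      exact h a
    rw [hexact]
    exact hy
end

section
/- Let G be an abelian group and L₁, L₂, L₃ ≤ G subgroups. Write Lᵢⱼ := Lᵢ ⊓ Lⱼ, S₂ := L₂ ⊓ (L₁ ⊔ L₃), S₁ := L₁ ⊓ (L₂ ⊔ L₃), where ⊔ denotes the join of subgroups. Let (p₁, p₃) be a splitting pair for S₂, i.e. additive homomorphisms p₁, p₃ : S₂ →+ G with p₁ k ∈ L₁, p₃ k ∈ L₃ and k = p₁ k + p₃ k for every k ∈ S₂. Then: (a) p₁ k ∈ S₁ for every k ∈ S₂; (b) p₁ descends to a well-defined group isomorphism p̃₁ from U₂ := S₂ ⧸ (L₁₂ ⊔ L₂₃) onto U₁ := S₁ ⧸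 (L₁₂ ⊔ L₃₁) (here L₁₂ ⊔ L₂₃ is a subgroup of S₂ and L₁₂ ⊔ L₃₁ a subgroup of S₁, and the quotients are by these subgroups); (c) p̃₁ is independent of the choice of splitting pair: if (p₁', p₃') is another splitting pair for S₂, then p₁ k − p₁' k ∈ L₃₁ for all k ∈ S₂, so the induced maps on U₂ coincide. -/
/-- Given subgroups `L₁, L₂, L₃` of an abelian group `G` and a splitting pair `(p₁, p₃)` for
`S₂ = L₂ ⊓ (L₁ ⊔ L₃)`: (a) `p₁` lands in `S₁ = L₁ ⊓ (L₂ ⊔ L₃)`; (b) `p₁` descends to a group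
isomorphism `U₂ = S₂ ⧸ (L₁₂ ⊔ L₂₃) ≃+ U₁ = S₁ ⧸ (L₁₂ ⊔ L₃₁)`; (c) this isomorphism does not
depend on the choice of splitting pair. -/
theorem stmt10 {G : Type*} [AddCommGroup G] (L₁ L₂ L₃ : AddSubgroup G)
    (p₁ p₃ : ↥(L₂ ⊓ (L₁ ⊔ L₃)) →+ G)
    (hp₁ : ∀ k : ↥(L₂ ⊓ (L₁ ⊔ L₃)), p₁ k ∈ L₁)
    (hp₃ : ∀ k : ↥(L₂ ⊓ (L₁ ⊔ L₃)), p₃ k ∈ L₃)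
    (hsplit : ∀ k : ↥(L₂ ⊓ (L₁ ⊔ L₃)), (k : G) = p₁ k + p₃ k) :
    (∀ k : ↥(L₂ ⊓ (L₁ ⊔ L₃)), p₁ k ∈ L₁ ⊓ (L₂ ⊔ L₃)) ∧
    ∃ e : (↥(L₂ ⊓ (L₁ ⊔ L₃)) ⧸ ((L₁ ⊓ L₂) ⊔ (L₂ ⊓ L₃)).addSubgroupOf (L₂ ⊓ (L₁ ⊔ L₃))) ≃+
          (↥(L₁ ⊓ (L₂ ⊔ L₃)) ⧸ ((L₁ ⊓ L₂) ⊔ (L₃ ⊓ L₁)).addSubgroupOf (L₁ ⊓ (L₂ ⊔ L₃))),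
      (∀ (k : ↥(L₂ ⊓ (L₁ ⊔ L₃))) (hk : p₁ k ∈ L₁ ⊓ (L₂ ⊔ L₃)),
        e (QuotientAddGroup.mk k) = QuotientAddGroup.mk ⟨p₁ k, hk⟩) ∧
      (∀ p₁' p₃' : ↥(L₂ ⊓ (L₁ ⊔ L₃)) →+ G,
        (∀ k, p₁' k ∈ L₁) → (∀ k, p₃' k ∈ L₃) →
        (∀ k : ↥(L₂ ⊓ (L₁ ⊔ L₃)), (k : G) = p₁' k + p₃' k) →
        (∀ k : ↥(L₂ ⊓ (L₁ ⊔ L₃)), p₁ k - p₁' k ∈ L₃ ⊓ L₁) ∧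
        ∀ (k : ↥(L₂ ⊓ (L₁ ⊔ L₃))) (hk' : p₁' k ∈ L₁ ⊓ (L₂ ⊔ L₃)),
          e (QuotientAddGroup.mk k) = QuotientAddGroup.mk ⟨p₁' k, hk'⟩) := by
  have hkmem : ∀ k : ↥(L₂ ⊓ (L₁ ⊔ L₃)), (k : G) ∈ L₂ ∧ (k : G) ∈ L₁ ⊔ L₃ :=
    fun k => AddSubgroup.mem_inf.mp k.2
  have hS₁ : ∀ k : ↥(L₂ ⊓ (L₁ ⊔ L₃)), p₁ k ∈ L₁ ⊓ (L₂ ⊔ L₃) := by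
    intro k
    refine AddSubgroup.mem_inf.mpr ⟨hp₁ k, ?_⟩
    have h1 : (k : G) - p₃ k = p₁ k := by rw [hsplit k]; abel
    rw [← h1]
    exact sub_mem (AddSubgroup.mem_sup_left (hkmem k).1) (AddSubgroup.mem_sup_right (hp₃ k))
  refine ⟨hS₁, ?_⟩
  set φ : ↥(L₂ ⊓ (L₁ ⊔ L₃)) →+ ↥(L₁ ⊓ (L₂ ⊔ L₃)) :=
    { toFun := fun k => ⟨p₁ k, hS₁ k⟩
      map_zero' := by ext; simp
      map_add' := fun a b => by ext; simp } with hφ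
  have hφcoe : ∀ k : ↥(L₂ ⊓ (L₁ ⊔ L₃)), ((φ k : ↥(L₁ ⊓ (L₂ ⊔ L₃))) : G) = p₁ k := fun _ => rfl
  have hcomap : ((L₁ ⊓ L₂) ⊔ (L₂ ⊓ L₃)).addSubgroupOf (L₂ ⊓ (L₁ ⊔ L₃)) ≤
      (((L₁ ⊓ L₂) ⊔ (L₃ ⊓ L₁)).addSubgroupOf (L₁ ⊓ (L₂ ⊔ L₃))).comap φ := by
    intro k hk
    simp only [AddSubgroup.mem_comap, AddSubgroup.mem_addSubgroupOf] at hk ⊢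
    obtain ⟨a, ha, b, hb, hab⟩ := AddSubgroup.mem_sup.mp hk
    obtain ⟨ha1, ha2⟩ := AddSubgroup.mem_inf.mp ha
    obtain ⟨hb1, hb2⟩ := AddSubgroup.mem_inf.mp hb
    apply AddSubgroup.mem_sup.mpr
    have h3 : (p₁ k : G) - a = b - p₃ k := by
      rw [sub_eq_sub_iff_add_eq_add, ← hsplit k, ← hab]
      exact (add_comm _ _)
    refine ⟨a, ha, p₁ k - a, ?_, by rw [hφcoe k]; abel⟩
    refine AddSubgroup.mem_inf.mpr ⟨?_, sub_mem (hp₁ k) ha1⟩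
    rw [h3]; exact sub_mem hb2 (hp₃ k)
  set f := QuotientAddGroup.map _ _ φ hcomap with hf
  have hinj : Function.Injective f := by
    rw [injective_iff_map_eq_zero]
    intro x
    refine QuotientAddGroup.induction_on x ?_
    intro k hk
    rw [hf, QuotientAddGroup.map_mk, QuotientAddGroup.eq_zero_iff] at hk
    rw [QuotientAddGroup.eq_zero_iff]
    rw [AddSubgroup.mem_addSubgroupOf] at hk ⊢
    obtain ⟨a, ha, c, hc, hac⟩ := AddSubgroup.mem_sup.mp hk
    obtain ⟨ha1, ha2⟩ := AddSubgroup.mem_inf.mp ha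
    obtain ⟨hc1, hc2⟩ := AddSubgroup.mem_inf.mp hc
    rw [hφcoe k] at hac
    apply AddSubgroup.mem_sup.mpr
    refine ⟨a, ha, (k : G) - a, ?_, by abel⟩
    refine AddSubgroup.mem_inf.mpr ⟨sub_mem (hkmem k).1 ha2, ?_⟩
    have h7 : (k : G) - a = c + p₃ k := by
      rw [hsplit k, ← hac]; abel
    rw [h7]; exact add_mem hc1 (hp₃ k)
  have hsurj : Function.Surjective f := by
    intro y
    refine QuotientAddGroup.induction_on y ?_
    intro s
    obtain ⟨hs1, hs2⟩ := AddSubgroup.mem_inf.mp s.2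
    obtain ⟨b, hb, c, hc, hbc⟩ := AddSubgroup.mem_sup.mp hs2
    have hbS₂ : b ∈ L₂ ⊓ (L₁ ⊔ L₃) := by
      refine AddSubgroup.mem_inf.mpr ⟨hb, ?_⟩
      have hb' : b = (s : G) - c := by rw [← hbc]; abel
      rw [hb']
      exact sub_mem (AddSubgroup.mem_sup_left hs1) (AddSubgroup.mem_sup_right hc)
    set x : ↥(L₂ ⊓ (L₁ ⊔ L₃)) := ⟨b, hbS₂⟩ with hx
    have hxb : (x : G) = b := rfl
    refine ⟨QuotientAddGroup.mk x, ?_⟩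
    rw [hf, QuotientAddGroup.map_mk, QuotientAddGroup.eq]
    rw [AddSubgroup.mem_addSubgroupOf]
    apply AddSubgroup.mem_sup.mpr
    refine ⟨0, zero_mem _, -(p₁ x) + s, ?_, ?_⟩
    · refine AddSubgroup.mem_inf.mpr ⟨?_, add_mem (neg_mem (hp₁ x)) hs1⟩
      have h4 : -(p₁ x : G) + s = p₃ x + c := by
        rw [← hbc, ← hxb, hsplit x]
        abel
      rw [h4]; exact add_mem (hp₃ x) hc
    · push_cast
      rw [hφcoe x]
      abel
  refine ⟨AddEquiv.ofBijective f ⟨hinj, hsurj⟩, ?_, ?_⟩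
  · intro k hk
    show f (QuotientAddGroup.mk k) = _
    rw [hf, QuotientAddGroup.map_mk]
    rfl
  · intro p₁' p₃' hp₁' hp₃' hsplit'
    have hdiff : ∀ k : ↥(L₂ ⊓ (L₁ ⊔ L₃)), p₁ k - p₁' k ∈ L₃ ⊓ L₁ := by
      intro k
      refine AddSubgroup.mem_inf.mpr ⟨?_, sub_mem (hp₁ k) (hp₁' k)⟩
      have h6 : p₁ k - p₁' k = p₃' k - p₃ k := by
        rw [sub_eq_sub_iff_add_eq_add, ← hsplit k, hsplit' k]
        exact add_comm _ _
      rw [h6]; exact sub_mem (hp₃' k) (hp₃ k)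
    refine ⟨hdiff, ?_⟩
    intro k hk'
    show f (QuotientAddGroup.mk k) = _
    rw [hf, QuotientAddGroup.map_mk, QuotientAddGroup.eq]
    rw [AddSubgroup.mem_addSubgroupOf]
    apply AddSubgroup.mem_sup.mpr
    refine ⟨0, zero_mem _, -(p₁ k) + p₁' k, ?_, by push_cast; rw [hφcoe k]; abel⟩
    have h8 : -(p₁ k) + p₁' k = -(p₁ k - p₁' k) := by abel
    rw [h8]
    exact neg_mem (hdiff k)
end

section
/- Let G be a finite abelian group with a perfect alternating biadditive pairing B : G → G → ℝ/ℤ, and let L₁, L₂, L₃ ≤ G be Lagrangian subgroups. Set S₂ := L₂ ⊓ (L₁ ⊔ L₃) and let (p₁, p₃) be a splitting pair for S₂ (additive homomorphisms p₁, p₃ : S₂ →+ G with p₁ k ∈ L₁, p₃ k ∈ L₃, k = p₁ k + p₃ k). Then for all k, k' ∈ S₂: (i) B (p₁ k) (p₃ k') = B k (p₃ k') = B (p₁ k) k'; (ii) B k (p₃ k') = B k' (p₃ k) (the pairing B₃₂₁(k,k') := B (p₁ k) (p₃ k') is symmetric); and (iii) if B k (p₃ k') = 0 for every k' ∈ S₂,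 then k ∈ (L₁ ⊓ L₂) ⊔ (L₂ ⊓ L₃). Consequently B₃₂₁ induces a non-degenerate symmetric pairing on U₂ := S₂ ⧸ ((L₁ ⊓ L₂) ⊔ (L₂ ⊓ L₃)). -/
/-!
Splitting `k = p₁ k + p₃ k` and using that each `Lᵢ` is isotropic gives (i); expanding
`0 = B k k'` (both lie in `L₂`) and using `B y x = -B x y` gives the symmetry (ii).
For (iii), symmetry puts `p₃ k` in `S₂^⊥`. Since `ℝ/ℤ`-valued characters separate points and
`B` is surjective, `H^⊥⊥ = H`, so `S₂^⊥ = L₂ ⊔ (L₁ ⊓ L₃)`; writing `p₃ k = y + z` accordingly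
gives `k = (p₁ k + z) + y ∈ (L₁ ⊓ L₂) ⊔ (L₂ ⊓ L₃)`. The induced pairing on `U₂` is then well
defined and non-degenerate.
-/

lemma exists_addMonoidHom_addCircle_apply_ne_zero {A : Type*} [AddCommGroup A] {a : A}
    (ha : a ≠ 0) : ∃ c : A →+ AddCircle (1 : ℝ), c a ≠ 0 := by
  obtain ⟨c, hc⟩ := CharacterModule.exists_character_apply_ne_zero_of_ne_zero ha
  let ι : AddCircle (1 : ℚ) →+ AddCircle (1 : ℝ) :=
    QuotientAddGroup.map _ _ (Rat.castHom ℝ).toAddMonoidHom <| by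
      rintro _ ⟨n, rfl⟩
      exact ⟨n, by simp⟩
  have hι : Function.Injective ι := by
    refine (injective_iff_map_eq_zero ι).2 fun x hx => ?_
    induction x using QuotientAddGroup.induction_on with
    | H q =>
      obtain ⟨n, hn⟩ := (AddCircle.coe_eq_zero_iff (1 : ℝ)).1 hx
      exact (AddCircle.coe_eq_zero_iff 1).2 ⟨n, Rat.cast_injective (α := ℝ) (by simpa using hn)⟩
  exact ⟨ι.comp c, fun h => hc (hι (h.trans ι.map_zero.symm))⟩

namespace AddSubgroup

variable {G C : Type*} [AddCommGroup G] [AddCommGroup C] (B : G →+ G →+ C)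

def perp (H : AddSubgroup G) : AddSubgroup G := ⨅ h ∈ H, (B.flip h).ker

variable {B} in
lemma mem_perp {H : AddSubgroup G} {x : G} : x ∈ perp B H ↔ ∀ h ∈ H, B x h = 0 := by
  simp [perp, mem_iInf]

lemma perp_sup (H K : AddSubgroup G) : perp B (H ⊔ K) = perp B H ⊓ perp B K := by
  ext x
  simp only [mem_inf, mem_perp, ← AddMonoidHom.mem_ker, ← SetLike.le_def, sup_le_iff]

variable {B} in
lemma perp_anti {H K : AddSubgroup G} (h : H ≤ K) : perp B K ≤ perp B H :=
  fun _ hx => mem_perp.2 fun s hs => mem_perp.1 hx s (h hs)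

variable {B} in
lemma le_perp_of_le {H L : AddSubgroup G} (hHL : H ≤ L) (hL : L ≤ perp B L) : H ≤ perp B H :=
  hHL.trans (hL.trans (perp_anti hHL))

lemma le_perp_perp (hrefl : ∀ x y, B x y = 0 → B y x = 0) (H : AddSubgroup G) :
    H ≤ perp B (perp B H) :=
  fun x hx => mem_perp.2 fun _ hy => hrefl _ _ (mem_perp.1 hy x hx)

section AddCircle

variable {B : G →+ G →+ AddCircle (1 : ℝ)}

lemma perp_perp (hB : Function.Surjective B) (hrefl : ∀ x y, B x y = 0 → B y x = 0)
    (H : AddSubgroup G) : perp B (perp B H) = H := by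
  refine le_antisymm (fun x hx => ?_) (le_perp_perp B hrefl H)
  by_contra hxH
  obtain ⟨c, hc⟩ := exists_addMonoidHom_addCircle_apply_ne_zero
    (mt (QuotientAddGroup.eq_zero_iff x).1 hxH)
  obtain ⟨y, hyc⟩ := hB (c.comp (QuotientAddGroup.mk' H))
  have hy : y ∈ perp B H := mem_perp.2 fun h hh => by
    simp [hyc, (QuotientAddGroup.eq_zero_iff h).2 hh]
  exact hc (by simpa [hyc] using hrefl _ _ (mem_perp.1 hx _ hy))

lemma perp_inf (hB : Function.Surjective B) (hrefl : ∀ x y, B x y = 0 → B y x = 0)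
    (H K : AddSubgroup G) : perp B (H ⊓ K) = perp B H ⊔ perp B K := by
  conv_lhs => rw [← perp_perp hB hrefl H, ← perp_perp hB hrefl K, ← perp_sup,
    perp_perp hB hrefl]

end AddCircle

end AddSubgroup

namespace QuotientAddGroup

variable {S C : Type*} [AddCommGroup S] [AddCommGroup C]

def lift₂ (N : AddSubgroup S) (F : S →+ S →+ C) (hl : ∀ n ∈ N, F n = 0)
    (hr : ∀ n ∈ N, ∀ k, F k n = 0) : S ⧸ N →+ S ⧸ N →+ C :=
  lift N (lift N F.flip fun n hn => AddMonoidHom.ext (hr n hn)).flip fun n hn =>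
    AddMonoidHom.mem_ker.2 <| addMonoidHom_ext _ <| AddMonoidHom.ext fun k =>
      DFunLike.congr_fun (hl n hn) k

@[simp]
lemma lift₂_mk {N : AddSubgroup S} {F : S →+ S →+ C} (hl : ∀ n ∈ N, F n = 0)
    (hr : ∀ n ∈ N, ∀ k, F k n = 0) (k k' : S) : lift₂ N F hl hr (mk k) (mk k') = F k k' := rfl

variable {N : AddSubgroup S} {F : S →+ S →+ C} {hl : ∀ n ∈ N, F n = 0}
  {hr : ∀ n ∈ N, ∀ k, F k n = 0}

lemma lift₂_comm (hF : ∀ k k', F k k' = F k' k) (u v : S ⧸ N) :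
    lift₂ N F hl hr u v = lift₂ N F hl hr v u := by
  induction u using induction_on
  induction v using induction_on
  simp [hF]

lemma eq_zero_of_forall_lift₂_eq_zero (hN : ∀ k, (∀ k', F k k' = 0) → k ∈ N) {u : S ⧸ N}
    (hu : ∀ v, lift₂ N F hl hr u v = 0) : u = 0 := by
  induction u using induction_on with
  | H k => exact (eq_zero_iff k).2 (hN k fun k' => hu (mk k'))

end QuotientAddGroup

section Splitting

variable {G C : Type*} [AddCommGroup G] [AddCommGroup C] {B : G →+ G →+ C}

open AddSubgroup

lemma apply_swap_of_alternating (halt : ∀ g, B g g = 0) (x y : G) : B y x = -B x y := by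
  have h := halt (x + y)
  simp only [map_add, AddMonoidHom.add_apply, halt x, halt y, zero_add, add_zero] at h
  exact eq_neg_of_add_eq_zero_left h

lemma apply_eq_zero_of_le_perp {L : AddSubgroup G} (hL : L ≤ perp B L) {a b : G} (ha : a ∈ L)
    (hb : b ∈ L) : B a b = 0 :=
  mem_perp.1 (hL ha) b hb

variable {L₁ L₂ L₃ S : AddSubgroup G} {p₁ p₃ : S →+ G}

lemma apply_coe_snd_eq_apply_fst_snd (h₃ : L₃ ≤ perp B L₃) (hp₃ : ∀ k, p₃ k ∈ L₃)
    (hsplit : ∀ k : S, (k : G) = p₁ k + p₃ k) (k k' : S) : B k (p₃ k') = B (p₁ k) (p₃ k') := by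
  rw [hsplit k, map_add, AddMonoidHom.add_apply, apply_eq_zero_of_le_perp h₃ (hp₃ k) (hp₃ k'),
    add_zero]

lemma apply_fst_coe_eq_apply_fst_snd (h₁ : L₁ ≤ perp B L₁) (hp₁ : ∀ k, p₁ k ∈ L₁)
    (hsplit : ∀ k : S, (k : G) = p₁ k + p₃ k) (k k' : S) : B (p₁ k) k' = B (p₁ k) (p₃ k') := by
  rw [hsplit k', map_add, apply_eq_zero_of_le_perp h₁ (hp₁ k) (hp₁ k'), zero_add]

lemma apply_fst_snd_comm (halt : ∀ g, B g g = 0) (h₁ : L₁ ≤ perp B L₁) (h₃ : L₃ ≤ perp B L₃)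
    (hS : S ≤ perp B S) (hp₁ : ∀ k, p₁ k ∈ L₁) (hp₃ : ∀ k, p₃ k ∈ L₃)
    (hsplit : ∀ k : S, (k : G) = p₁ k + p₃ k) (k k' : S) :
    B (p₁ k) (p₃ k') = B (p₁ k') (p₃ k) := by
  have h : B k k' = 0 := apply_eq_zero_of_le_perp hS k.2 k'.2
  have h₃₁ : B (p₃ k) k' = -B (p₁ k') (p₃ k) := by
    rw [apply_swap_of_alternating halt, apply_coe_snd_eq_apply_fst_snd h₃ hp₃ hsplit]
  rwa [hsplit k, map_add, AddMonoidHom.add_apply, apply_fst_coe_eq_apply_fst_snd h₁ hp₁ hsplit,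
    h₃₁, ← sub_eq_add_neg, sub_eq_zero] at h

lemma apply_snd_eq_zero_of_mem_sup_inf (h₁ : L₁ ≤ perp B L₁) (h₂ : L₂ ≤ perp B L₂)
    (h₃ : L₃ ≤ perp B L₃) (hS : S ≤ L₂) (hp₁ : ∀ k, p₁ k ∈ L₁) (hp₃ : ∀ k, p₃ k ∈ L₃)
    (hsplit : ∀ k : S, (k : G) = p₁ k + p₃ k) {n : G}
    (hn : n ∈ (L₁ ⊓ L₂) ⊔ (L₂ ⊓ L₃)) (k : S) : B n (p₃ k) = 0 := by
  obtain ⟨a, ha, b, hb, rfl⟩ := mem_sup.1 hn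
  have hak : B a k = 0 := apply_eq_zero_of_le_perp h₂ ha.2 (hS k.2)
  rw [hsplit k, map_add, apply_eq_zero_of_le_perp h₁ ha.1 (hp₁ k), zero_add] at hak
  rw [map_add, AddMonoidHom.add_apply, hak, apply_eq_zero_of_le_perp h₃ hb.2 (hp₃ k), add_zero]

end Splitting

section Lagrangian

open AddSubgroup

variable {G : Type*} [AddCommGroup G] {B : G →+ G →+ AddCircle (1 : ℝ)}
  {L₁ L₂ L₃ : AddSubgroup G} {p₁ p₃ : ↥(L₂ ⊓ (L₁ ⊔ L₃)) →+ G}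

lemma mem_sup_inf_of_forall_apply_snd_eq_zero (hB : Function.Surjective B)
    (halt : ∀ g, B g g = 0) (h₁ : perp B L₁ = L₁) (h₂ : perp B L₂ = L₂) (h₃ : perp B L₃ = L₃)
    (hp₁ : ∀ k, p₁ k ∈ L₁) (hp₃ : ∀ k, p₃ k ∈ L₃)
    (hsplit : ∀ k : ↥(L₂ ⊓ (L₁ ⊔ L₃)), (k : G) = p₁ k + p₃ k) (k : ↥(L₂ ⊓ (L₁ ⊔ L₃)))
    (hk : ∀ k', B k (p₃ k') = 0) : (k : G) ∈ (L₁ ⊓ L₂) ⊔ (L₂ ⊓ L₃) := by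
  have hrefl (x y : G) (h : B x y = 0) : B y x = 0 := by
    rw [apply_swap_of_alternating halt, h, neg_zero]
  have hS := le_perp_of_le (inf_le_left : L₂ ⊓ (L₁ ⊔ L₃) ≤ L₂) h₂.ge
  have hp₃k : p₃ k ∈ perp B (L₂ ⊓ (L₁ ⊔ L₃)) := mem_perp.2 fun s hs => hrefl _ _ <| calc
    B s (p₃ k) = B (p₁ ⟨s, hs⟩) (p₃ k) :=
      apply_coe_snd_eq_apply_fst_snd h₃.ge hp₃ hsplit ⟨s, hs⟩ k
    _ = B (p₁ k) (p₃ ⟨s, hs⟩) := apply_fst_snd_comm halt h₁.ge h₃.ge hS hp₁ hp₃ hsplit _ _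
    _ = 0 := (apply_coe_snd_eq_apply_fst_snd h₃.ge hp₃ hsplit _ _).symm.trans (hk _)
  rw [perp_inf hB hrefl, perp_sup, h₁, h₂, h₃] at hp₃k
  obtain ⟨y, hy, z, hz, hyz⟩ := mem_sup.1 hp₃k
  have hkyz : (k : G) = (p₁ k + z) + y := by rw [hsplit k, ← hyz]; abel
  refine mem_sup.2 ⟨p₁ k + z, ⟨add_mem (hp₁ k) hz.1, ?_⟩, y, ⟨hy, ?_⟩, hkyz.symm⟩
  · rw [eq_sub_of_add_eq hkyz.symm]
    exact L₂.sub_mem k.2.1 hy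
  · rw [eq_sub_of_add_eq hyz]
    exact L₃.sub_mem (hp₃ k) hz.2

end Lagrangian

theorem stmt11_general {G : Type*} [AddCommGroup G]
    (B : G →+ G →+ AddCircle (1 : ℝ))
    (hperf : Function.Bijective ⇑B)
    (halt : ∀ g : G, B g g = 0)
    (L₁ L₂ L₃ : AddSubgroup G)
    (hL₁ : ∀ x : G, x ∈ L₁ ↔ ∀ l ∈ L₁, B x l = 0)
    (hL₂ : ∀ x : G, x ∈ L₂ ↔ ∀ l ∈ L₂, B x l = 0)
    (hL₃ : ∀ x : G, x ∈ L₃ ↔ ∀ l ∈ L₃, B x l = 0)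
    (p₁ p₃ : ↥(L₂ ⊓ (L₁ ⊔ L₃)) →+ G)
    (hp₁ : ∀ k : ↥(L₂ ⊓ (L₁ ⊔ L₃)), p₁ k ∈ L₁)
    (hp₃ : ∀ k : ↥(L₂ ⊓ (L₁ ⊔ L₃)), p₃ k ∈ L₃)
    (hsplit : ∀ k : ↥(L₂ ⊓ (L₁ ⊔ L₃)), (k : G) = p₁ k + p₃ k) :
    (∀ k k' : ↥(L₂ ⊓ (L₁ ⊔ L₃)),
      B (p₁ k) (p₃ k') = B (k : G) (p₃ k') ∧ B (p₁ k) (p₃ k') = B (p₁ k) (k' : G)) ∧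
    (∀ k k' : ↥(L₂ ⊓ (L₁ ⊔ L₃)), B (k : G) (p₃ k') = B (k' : G) (p₃ k)) ∧
    (∀ k : ↥(L₂ ⊓ (L₁ ⊔ L₃)),
      (∀ k' : ↥(L₂ ⊓ (L₁ ⊔ L₃)), B (k : G) (p₃ k') = 0) →
      (k : G) ∈ (L₁ ⊓ L₂) ⊔ (L₂ ⊓ L₃)) ∧
    ∃ B' : (↥(L₂ ⊓ (L₁ ⊔ L₃)) ⧸ ((L₁ ⊓ L₂) ⊔ (L₂ ⊓ L₃)).addSubgroupOf (L₂ ⊓ (L₁ ⊔ L₃))) →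
           (↥(L₂ ⊓ (L₁ ⊔ L₃)) ⧸ ((L₁ ⊓ L₂) ⊔ (L₂ ⊓ L₃)).addSubgroupOf (L₂ ⊓ (L₁ ⊔ L₃))) →
           AddCircle (1 : ℝ),
      (∀ k k' : ↥(L₂ ⊓ (L₁ ⊔ L₃)),
        B' (QuotientAddGroup.mk k) (QuotientAddGroup.mk k') = B (p₁ k) (p₃ k')) ∧
      (∀ u v, B' u v = B' v u) ∧
      (∀ u, (∀ v, B' u v = 0) → u = 0) := by
  have h₁ : AddSubgroup.perp B L₁ = L₁ :=
    AddSubgroup.ext fun x => AddSubgroup.mem_perp.trans (hL₁ x).symm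
  have h₂ : AddSubgroup.perp B L₂ = L₂ :=
    AddSubgroup.ext fun x => AddSubgroup.mem_perp.trans (hL₂ x).symm
  have h₃ : AddSubgroup.perp B L₃ = L₃ :=
    AddSubgroup.ext fun x => AddSubgroup.mem_perp.trans (hL₃ x).symm
  have hS := AddSubgroup.le_perp_of_le (inf_le_left : L₂ ⊓ (L₁ ⊔ L₃) ≤ L₂) h₂.ge
  have hleft := apply_coe_snd_eq_apply_fst_snd h₃.ge hp₃ hsplit
  have hright := apply_fst_coe_eq_apply_fst_snd h₁.ge hp₁ hsplit
  have hcomm := apply_fst_snd_comm halt h₁.ge h₃.ge hS hp₁ hp₃ hsplit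
  have hrad := mem_sup_inf_of_forall_apply_snd_eq_zero hperf.2 halt h₁ h₂ h₃ hp₁ hp₃ hsplit
  let N := ((L₁ ⊓ L₂) ⊔ (L₂ ⊓ L₃)).addSubgroupOf (L₂ ⊓ (L₁ ⊔ L₃))
  let F := (B.comp p₁).compl₂ p₃
  have hl : ∀ n ∈ N, F n = 0 := fun n hn => AddMonoidHom.ext fun k => (hleft n k).symm.trans <|
    apply_snd_eq_zero_of_mem_sup_inf h₁.ge h₂.ge h₃.ge inf_le_left hp₁ hp₃ hsplit
      (AddSubgroup.mem_addSubgroupOf.1 hn) k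
  have hr : ∀ n ∈ N, ∀ k, F k n = 0 :=
    fun n hn k => (hcomm k n).trans (DFunLike.congr_fun (hl n hn) k)
  refine ⟨fun k k' => ⟨(hleft k k').symm, (hright k k').symm⟩,
    fun k k' => by rw [hleft, hleft, hcomm], hrad,
    fun u v => QuotientAddGroup.lift₂ N F hl hr u v, fun k k' => rfl,
    QuotientAddGroup.lift₂_comm hcomm, fun u => QuotientAddGroup.eq_zero_of_forall_lift₂_eq_zero
      fun k hk => AddSubgroup.mem_addSubgroupOf.2
        (hrad k fun k' => (hleft k k').trans (hk k'))⟩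

/-- For Lagrangian subgroups `L₁, L₂, L₃` of a finite abelian group with perfect alternating
pairing `B` and a splitting pair `(p₁, p₃)` for `S₂ = L₂ ⊓ (L₁ ⊔ L₃)`: (i) the pairing
`B₃₂₁(k,k') = B (p₁ k) (p₃ k')` equals `B k (p₃ k')` and `B (p₁ k) k'`; (ii) it is symmetric;
(iii) its radical is `(L₁ ⊓ L₂) ⊔ (L₂ ⊓ L₃)`; consequently it induces a non-degenerate symmetric
pairing on `U₂ = S₂ ⧸ ((L₁ ⊓ L₂) ⊔ (L₂ ⊓ L₃))`. -/
theorem stmt11 {G : Type*} [AddCommGroup G] [Finite G]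
    (B : G →+ G →+ AddCircle (1 : ℝ))
    (hperf : Function.Bijective ⇑B)
    (halt : ∀ g : G, B g g = 0)
    (L₁ L₂ L₃ : AddSubgroup G)
    (hL₁ : ∀ x : G, x ∈ L₁ ↔ ∀ l ∈ L₁, B x l = 0)
    (hL₂ : ∀ x : G, x ∈ L₂ ↔ ∀ l ∈ L₂, B x l = 0)
    (hL₃ : ∀ x : G, x ∈ L₃ ↔ ∀ l ∈ L₃, B x l = 0)
    (p₁ p₃ : ↥(L₂ ⊓ (L₁ ⊔ L₃)) →+ G)
    (hp₁ : ∀ k : ↥(L₂ ⊓ (L₁ ⊔ L₃)), p₁ k ∈ L₁)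
    (hp₃ : ∀ k : ↥(L₂ ⊓ (L₁ ⊔ L₃)), p₃ k ∈ L₃)
    (hsplit : ∀ k : ↥(L₂ ⊓ (L₁ ⊔ L₃)), (k : G) = p₁ k + p₃ k) :
    (∀ k k' : ↥(L₂ ⊓ (L₁ ⊔ L₃)),
      B (p₁ k) (p₃ k') = B (k : G) (p₃ k') ∧ B (p₁ k) (p₃ k') = B (p₁ k) (k' : G)) ∧
    (∀ k k' : ↥(L₂ ⊓ (L₁ ⊔ L₃)), B (k : G) (p₃ k') = B (k' : G) (p₃ k)) ∧
    (∀ k : ↥(L₂ ⊓ (L₁ ⊔ L₃)),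
      (∀ k' : ↥(L₂ ⊓ (L₁ ⊔ L₃)), B (k : G) (p₃ k') = 0) →
      (k : G) ∈ (L₁ ⊓ L₂) ⊔ (L₂ ⊓ L₃)) ∧
    ∃ B' : (↥(L₂ ⊓ (L₁ ⊔ L₃)) ⧸ ((L₁ ⊓ L₂) ⊔ (L₂ ⊓ L₃)).addSubgroupOf (L₂ ⊓ (L₁ ⊔ L₃))) →
           (↥(L₂ ⊓ (L₁ ⊔ L₃)) ⧸ ((L₁ ⊓ L₂) ⊔ (L₂ ⊓ L₃)).addSubgroupOf (L₂ ⊓ (L₁ ⊔ L₃))) →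
           AddCircle (1 : ℝ),
      (∀ k k' : ↥(L₂ ⊓ (L₁ ⊔ L₃)),
        B' (QuotientAddGroup.mk k) (QuotientAddGroup.mk k') = B (p₁ k) (p₃ k')) ∧
      (∀ u v, B' u v = B' v u) ∧
      (∀ u, (∀ v, B' u v = 0) → u = 0) :=
  stmt11_general B hperf halt L₁ L₂ L₃ hL₁ hL₂ hL₃ p₁ p₃ hp₁ hp₃ hsplit
end

section
/- Let G be an abelian group, M a commutative group written multiplicatively, B : G → G → M a bimultiplicative pairing (additive in each variable into M), m a natural number, and q : G → M a function satisfying q(x + y) = q(x)·q(y)·(B x y)^m for all x, y ∈ G. Let L₁, L₂, L₃ ≤ G be subgroups with q(l) = 1 for every l belonging to L₁, L₂ or L₃. Set S₂ := L₂ ⊓ (L₁ ⊔ L₃) and let (p₁, p₃) be a splitting pair for S₂. Then (B (p₁ k) (p₃ k))^m = 1 for every k ∈ S₂. (This is the paper's statement that, in the presence of a quadratic refinement q_r of B^{r/2} vanishing on the three Lagrangians, the pairing B₃₂₁(u,u) = B(p₁ u, p₃ u) is even.) -/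
/-- If `q` satisfies `q (x+y) = q x · q y · (B x y)^m` for a bimultiplicative pairing `B`, and `q`
equals `1` on subgroups `L₁, L₂, L₃`, then for any splitting pair `(p₁, p₃)` for
`S₂ = L₂ ⊓ (L₁ ⊔ L₃)` one has `(B (p₁ k) (p₃ k))^m = 1` for every `k ∈ S₂`: the pairing
`B₃₂₁(u,u) = B (p₁ u) (p₃ u)` is even. -/
theorem stmt13 {G M : Type*} [AddCommGroup G] [CommGroup M]
    (B : G → G → M)
    (hB1 : ∀ x x' y : G, B (x + x') y = B x y * B x' y)
    (hB2 : ∀ x y y' : G, B x (y + y') = B x y * B x y')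
    (m : ℕ) (q : G → M)
    (hq : ∀ x y : G, q (x + y) = q x * q y * (B x y) ^ m)
    (L₁ L₂ L₃ : AddSubgroup G)
    (hq₁ : ∀ l ∈ L₁, q l = 1) (hq₂ : ∀ l ∈ L₂, q l = 1) (hq₃ : ∀ l ∈ L₃, q l = 1)
    (p₁ p₃ : ↥(L₂ ⊓ (L₁ ⊔ L₃)) →+ G)
    (hp₁ : ∀ k : ↥(L₂ ⊓ (L₁ ⊔ L₃)), p₁ k ∈ L₁)
    (hp₃ : ∀ k : ↥(L₂ ⊓ (L₁ ⊔ L₃)), p₃ k ∈ L₃)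
    (hsplit : ∀ k : ↥(L₂ ⊓ (L₁ ⊔ L₃)), (k : G) = p₁ k + p₃ k) :
    ∀ k : ↥(L₂ ⊓ (L₁ ⊔ L₃)), (B (p₁ k) (p₃ k)) ^ m = 1 := by
  intro k
  have h1 : q (p₁ k) = 1 := hq₁ _ (hp₁ k)
  have h3 : q (p₃ k) = 1 := hq₃ _ (hp₃ k)
  have h2 : q ((k : G)) = 1 := hq₂ _ k.2.1
  have := hq (p₁ k) (p₃ k)
  rw [← hsplit k, h1, h3, h2] at this
  simpa using this.symm
end

section
/- Let G be a finite abelian group with a perfect alternating biadditive pairing B : G → G → ℝ/ℤ, and let L₁, L₂, L₃ ≤ G be Lagrangian subgroups. Then card(L₁ ⊓ L₂) · card(L₃ ⊓ (L₁ ⊔ L₂)) = card(L₁ ⊓ L₂ ⊓ L₃) · card(L₃). Equivalently, the pairing identifies the quotient (L₁ ⊓ L₂) ⧸ (L₁ ⊓ L₂ ⊓ L₃) with the Pontryagin dual of L₃ ⧸ (L₃ ⊓ (L₁ ⊔ L₂)). -/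
/-!
Characters of a subgroup of a finite abelian group extend to the whole group, since `ℝ/ℤ` is
divisible, and there are as many of them as elements. For a perfect pairing this gives
`|H| · |H^⊥| = |G|`; if the pairing is alternating then `H ≤ H^⊥⊥`, hence `H^⊥⊥ = H`, so `⊥`
exchanges `⊔` and `⊓`. For a Lagrangian `N` and any `M` the orthogonal of `N ⊓ M^⊥` is `N ⊔ M`,
so `|N ⊓ M^⊥| · |N ⊔ M| = |G| = |N|²`, and `|N ⊔ M| · |N ⊓ M| = |N| · |M|` turns this into
`|M| · |N ⊓ M^⊥| = |M ⊓ N| · |N|`. The theorem is the case `M = L₁ ⊓ L₂`, `N = L₃`, where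
`M^⊥ = L₁ ⊔ L₂`.
-/

theorem AddSubgroup.card_sup_mul_card_inf {G : Type*} [AddCommGroup G] (H K : AddSubgroup G) :
    Nat.card ↥(H ⊔ K) * Nat.card ↥(H ⊓ K) = Nat.card H * Nat.card K := by
  have hK : Nat.card K * K.relIndex H = Nat.card ↥(H ⊔ K) := by
    rw [← relIndex_sup_right, ← relIndex_bot_left, ← relIndex_bot_left,
      relIndex_mul_relIndex _ _ _ bot_le le_sup_right]
  have hH : Nat.card ↥(K ⊓ H) * K.relIndex H = Nat.card H := by
    rw [← inf_relIndex_right, ← relIndex_bot_left, ← relIndex_bot_left,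
      relIndex_mul_relIndex _ _ _ bot_le inf_le_right]
  rw [← hK, ← hH, inf_comm]
  ring

noncomputable def AddCircle.addEquivAdditiveCircle {p : ℝ} (hp : p ≠ 0) :
    AddCircle p ≃+ Additive Circle :=
  AddEquiv.mk' ((AddCircle.homeomorphCircle hp).toEquiv.trans Additive.ofMul) fun x y => by
    simp [AddCircle.homeomorphCircle_apply, AddCircle.toCircle_add]

theorem AddCircle.card_addMonoidHom {p : ℝ} [Fact (0 < p)] (A : Type*) [AddCommGroup A]
    [Finite A] : Nat.card (A →+ AddCircle p) = Nat.card A :=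
  calc Nat.card (A →+ AddCircle p) = Nat.card (AddChar A Circle) :=
        Nat.card_congr <| AddEquiv.addMonoidHomCongrRightEquiv
          (addEquivAdditiveCircle (Fact.out : 0 < p).ne') |>.trans AddChar.toAddMonoidHomEquiv.symm
    _ = Nat.card (AddChar A ℂ) := Nat.card_congr AddChar.circleEquivComplex.toEquiv
    _ = Nat.card A := by
      classical
      have := Fintype.ofFinite A
      simp only [Nat.card_eq_fintype_card, AddChar.card_eq]

namespace AddMonoidHom

section Orthogonal

variable {G C : Type*} [AddCommGroup G] [AddCommGroup C] (B : G →+ G →+ C)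

def perp (H : AddSubgroup G) : AddSubgroup G :=
  (B.compl₂ H.subtype).ker

@[simp]
theorem mem_perp {H : AddSubgroup G} {x : G} : x ∈ B.perp H ↔ ∀ h ∈ H, B x h = 0 := by
  simp [perp, AddMonoidHom.ext_iff]

theorem perp_sup (H K : AddSubgroup G) : B.perp (H ⊔ K) = B.perp H ⊓ B.perp K := by
  ext x
  simp only [mem_perp, AddSubgroup.mem_inf]
  refine ⟨fun h => ⟨fun l hl => h l (AddSubgroup.mem_sup_left hl),
    fun l hl => h l (AddSubgroup.mem_sup_right hl)⟩, fun ⟨hH, hK⟩ l hl => ?_⟩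
  exact (sup_le (fun l hl => hH l hl) (fun l hl => hK l hl) : H ⊔ K ≤ (B x).ker) hl

theorem apply_swap_eq_neg (halt : ∀ g, B g g = 0) (x y : G) : B y x = -B x y := by
  have h := halt (x + y)
  simp only [map_add, add_apply, halt x, halt y, zero_add, add_zero] at h
  exact eq_neg_of_add_eq_zero_left h

theorem le_perp_perp (halt : ∀ g, B g g = 0) (H : AddSubgroup G) : H ≤ B.perp (B.perp H) := by
  intro x hx
  simp only [mem_perp] at hx ⊢
  intro y hy
  rw [apply_swap_eq_neg B halt, hy x hx, neg_zero]

end Orthogonal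

section AddCircle

variable {G : Type*} [AddCommGroup G] [Finite G] {p : ℝ} [Fact (0 < p)]
  (B : G →+ G →+ AddCircle p)

theorem card_mul_card_perp (hB : Function.Surjective B) (H : AddSubgroup G) :
    Nat.card H * Nat.card (B.perp H) = Nat.card G := by
  have hres : Function.Surjective (B.compl₂ H.subtype) := fun f => by
    obtain ⟨g, hg⟩ := (Module.Baer.of_divisible _).extension_property_addMonoidHom H.subtype
      Subtype.val_injective f
    obtain ⟨x, rfl⟩ := hB g
    exact ⟨x, hg⟩
  rw [← (B.compl₂ H.subtype).ker.card_mul_index, AddSubgroup.index_ker, range_eq_top.mpr hres,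
    AddSubgroup.card_top, AddCircle.card_addMonoidHom, mul_comm]
  rfl

theorem perp_perp (hB : Function.Surjective B) (halt : ∀ g, B g g = 0) (H : AddSubgroup G) :
    B.perp (B.perp H) = H := by
  refine (AddSubgroup.eq_of_le_of_card_ge (B.le_perp_perp halt H) ?_).symm
  have h₁ := B.card_mul_card_perp hB H
  have h₂ := B.card_mul_card_perp hB (B.perp H)
  exact (Nat.eq_of_mul_eq_mul_left Nat.card_pos ((h₂.trans h₁.symm).trans (mul_comm _ _))).le

theorem perp_inf (hB : Function.Surjective B) (halt : ∀ g, B g g = 0) (H K : AddSubgroup G) :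
    B.perp (H ⊓ K) = B.perp H ⊔ B.perp K := by
  conv_lhs => rw [← B.perp_perp hB halt H, ← B.perp_perp hB halt K, ← perp_sup]
  exact B.perp_perp hB halt _

theorem card_mul_card_inf_perp_of_perp_eq_self (hB : Function.Surjective B)
    (halt : ∀ g, B g g = 0) (M : AddSubgroup G) {N : AddSubgroup G} (hN : B.perp N = N) :
    Nat.card M * Nat.card ↥(N ⊓ B.perp M) = Nat.card ↥(M ⊓ N) * Nat.card N := by
  have hG : Nat.card N * Nat.card N = Nat.card G := by
    simpa only [hN] using B.card_mul_card_perp hB N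
  have hsup : Nat.card ↥(N ⊓ B.perp M) * Nat.card ↥(N ⊔ M) = Nat.card G := by
    rw [← B.card_mul_card_perp hB (N ⊓ B.perp M), B.perp_inf hB halt, hN, B.perp_perp hB halt]
  have hinf := AddSubgroup.card_sup_mul_card_inf N M
  rw [inf_comm] at hinf
  refine Nat.eq_of_mul_eq_mul_right (Nat.card_pos (α := ↥(N ⊔ M))) ?_
  calc Nat.card M * Nat.card ↥(N ⊓ B.perp M) * Nat.card ↥(N ⊔ M)
      = Nat.card N * Nat.card M * Nat.card N := by rw [mul_assoc, hsup, ← hG]; ring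
    _ = Nat.card ↥(M ⊓ N) * Nat.card N * Nat.card ↥(N ⊔ M) := by rw [← hinf]; ring

end AddCircle

end AddMonoidHom

/-- For three Lagrangian subgroups `L₁, L₂, L₃` of a finite abelian group with a perfect
alternating pairing, `|L₁ ⊓ L₂| · |L₃ ⊓ (L₁ ⊔ L₂)| = |L₁ ⊓ L₂ ⊓ L₃| · |L₃|`. -/
theorem stmt14 {G : Type*} [AddCommGroup G] [Finite G]
    (B : G →+ G →+ AddCircle (1 : ℝ))
    (hperf : Function.Bijective ⇑B)
    (halt : ∀ g : G, B g g = 0)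
    (L₁ L₂ L₃ : AddSubgroup G)
    (hL₁ : ∀ x : G, x ∈ L₁ ↔ ∀ l ∈ L₁, B x l = 0)
    (hL₂ : ∀ x : G, x ∈ L₂ ↔ ∀ l ∈ L₂, B x l = 0)
    (hL₃ : ∀ x : G, x ∈ L₃ ↔ ∀ l ∈ L₃, B x l = 0) :
    Nat.card ↥(L₁ ⊓ L₂) * Nat.card ↥(L₃ ⊓ (L₁ ⊔ L₂)) =
      Nat.card ↥(L₁ ⊓ L₂ ⊓ L₃) * Nat.card ↥L₃ := by
  have perp_eq_self {L : AddSubgroup G} (hL : ∀ x, x ∈ L ↔ ∀ l ∈ L, B x l = 0) : B.perp L = L :=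
    AddSubgroup.ext fun x => by rw [B.mem_perp, hL]
  have hperp : B.perp (L₁ ⊓ L₂) = L₁ ⊔ L₂ := by
    rw [B.perp_inf hperf.2 halt, perp_eq_self hL₁, perp_eq_self hL₂]
  simpa only [hperp] using
    B.card_mul_card_inf_perp_of_perp_eq_self hperf.2 halt (L₁ ⊓ L₂) (perp_eq_self hL₃)
end

section
/- Fix integers q ≥ 1 and p. Suppose given families of abelian groups S n and Y n indexed by n ∈ ℤ, in which every element of every Y n is 2-torsion, together with additive maps d_Y : Y n →+ Y (n+1), and for all integers i, a, b a biadditive higher cup product ∪ᵢ : Y a → Y b → S (a+b−i) which is the zero map whenever i < 0 and all of whose values are 2-torsion. Define on C̄^p := S p × Y (p−q) the operation (s₁,y₁) ⊞ (s₂,y₂) := (s₁ + s₂ + (d_Y y₁) ∪_{p−2q+1} y₂ + y₁ ∪_{p−2q} y₂, y₁ + y₂). Then ⊞ is associative, (0,0) is a two-sided identity, and every element (s,y) has two-sided inverse (−s + (d_Y y) ∪_{p−2q+1} y + y ∪_{p−2q} y, y); hence (C̄^p, ⊞) is a (generally non-abelian) group. -/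
/-!
`⊞` is the group law of the central extension of `Y (p - q)` by `S p` defined by the bilinear
2-cocycle `f y₁ y₂ = (d_Y y₁) ∪_{p-2q+1} y₂ + y₁ ∪_{p-2q} y₂`: any biadditive `f` satisfies the
cocycle identity `f y₁ y₂ + f (y₁ + y₂) y₃ = f y₂ y₃ + f y₁ (y₂ + y₃)`, which is associativity.
Since `y + y = 0` and `f` is 2-torsion-valued, `(s, y)` is inverted by `(-s + f y y, y)`.
-/

/-- The E-cochain sum `⊞` on `C̄^p = S p × Y (p - q)`:
`(s₁,y₁) ⊞ (s₂,y₂) = (s₁ + s₂ + (d_Y y₁) ∪_{p-2q+1} y₂ + y₁ ∪_{p-2q} y₂, y₁ + y₂)`. -/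
def eBoxplus (q : ℤ) {S Y : ℤ → Type*} [∀ n, AddCommGroup (S n)] [∀ n, AddCommGroup (Y n)]
    (dY : ∀ a b : ℤ, a + 1 = b → Y a →+ Y b)
    (cup : ∀ i a b c : ℤ, a + b - i = c → Y a → Y b → S c)
    (p : ℤ) (x₁ x₂ : S p × Y (p - q)) : S p × Y (p - q) :=
  (x₁.1 + x₂.1
      + cup (p - 2 * q + 1) (p - q + 1) (p - q) p (by ring) (dY (p - q) (p - q + 1) rfl x₁.2) x₂.2
      + cup (p - 2 * q) (p - q) (p - q) p (by ring) x₁.2 x₂.2,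
    x₁.2 + x₂.2)

section TwistedAdd

variable {A B : Type*} [AddCommGroup A] [AddCommGroup B]

def twistedAdd (f : B → B → A) (x y : A × B) : A × B :=
  (x.1 + y.1 + f x.2 y.2, x.2 + y.2)

variable (f : B → B → A)

theorem twistedAdd_assoc (hl : ∀ u u' v, f (u + u') v = f u v + f u' v)
    (hr : ∀ u v v', f u (v + v') = f u v + f u v') (x y z : A × B) :
    twistedAdd f (twistedAdd f x y) z = twistedAdd f x (twistedAdd f y z) := by
  simp only [twistedAdd, hl, hr, Prod.mk.injEq]
  constructor <;> abel

theorem zero_twistedAdd (hl : ∀ u u' v, f (u + u') v = f u v + f u' v) (x : A × B) :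
    twistedAdd f 0 x = x := by
  have hf0 : f 0 x.2 = 0 := by simpa using hl 0 0 x.2
  simp [twistedAdd, hf0]

theorem twistedAdd_zero (hr : ∀ u v v', f u (v + v') = f u v + f u v') (x : A × B) :
    twistedAdd f x 0 = x := by
  have hf0 : f x.2 0 = 0 := by simpa using hr x.2 0 0
  simp [twistedAdd, hf0]

variable {f} {s : A} {y : B}

theorem twistedAdd_mk_neg_add (hy : y + y = 0) (hf : f y y + f y y = 0) :
    twistedAdd f (s, y) (-s + f y y, y) = 0 := by
  simp only [twistedAdd, hy, Prod.mk_eq_zero, and_true]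
  rw [← hf]
  abel

theorem mk_neg_add_twistedAdd (hy : y + y = 0) (hf : f y y + f y y = 0) :
    twistedAdd f (-s + f y y, y) (s, y) = 0 := by
  simp only [twistedAdd, hy, Prod.mk_eq_zero, and_true]
  rw [← hf]
  abel

end TwistedAdd

section ECocycle

variable (q : ℤ) {S Y : ℤ → Type*} [∀ n, AddCommGroup (S n)] [∀ n, AddCommGroup (Y n)]
  (dY : ∀ a b : ℤ, a + 1 = b → Y a →+ Y b)
  (cup : ∀ i a b c : ℤ, a + b - i = c → Y a → Y b → S c) (p : ℤ)

def eCocycle (u v : Y (p - q)) : S p :=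
  cup (p - 2 * q + 1) (p - q + 1) (p - q) p (by ring) (dY (p - q) (p - q + 1) rfl u) v
    + cup (p - 2 * q) (p - q) (p - q) p (by ring) u v

theorem eBoxplus_eq_twistedAdd : eBoxplus q dY cup p = twistedAdd (eCocycle q dY cup p) := by
  ext x y <;> simp only [eBoxplus, twistedAdd, eCocycle, add_assoc]

variable {cup}

theorem eCocycle_add_left
    (hcupl : ∀ (i a b c : ℤ) (h : a + b - i = c) (u u' : Y a) (v : Y b),
      cup i a b c h (u + u') v = cup i a b c h u v + cup i a b c h u' v) (u u' v : Y (p - q)) :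
    eCocycle q dY cup p (u + u') v = eCocycle q dY cup p u v + eCocycle q dY cup p u' v := by
  simp only [eCocycle, map_add, hcupl, add_add_add_comm]

theorem eCocycle_add_right
    (hcupr : ∀ (i a b c : ℤ) (h : a + b - i = c) (u : Y a) (v v' : Y b),
      cup i a b c h u (v + v') = cup i a b c h u v + cup i a b c h u v') (u v v' : Y (p - q)) :
    eCocycle q dY cup p u (v + v') = eCocycle q dY cup p u v + eCocycle q dY cup p u v' := by
  simp only [eCocycle, hcupr, add_add_add_comm]

theorem eCocycle_add_self
    (hcup2 : ∀ (i a b c : ℤ) (h : a + b - i = c) (u : Y a) (v : Y b),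
      cup i a b c h u v + cup i a b c h u v = 0) (u v : Y (p - q)) :
    eCocycle q dY cup p u v + eCocycle q dY cup p u v = 0 := by
  rw [eCocycle, add_add_add_comm, hcup2, hcup2, add_zero]

end ECocycle

/-- The operation `⊞` on `C̄^p = S p × Y (p - q)` is associative, has `(0,0)` as a two-sided
identity, and every `(s, y)` has the two-sided inverse
`(-s + (d_Y y) ∪_{p-2q+1} y + y ∪_{p-2q} y, y)`; hence `(C̄^p, ⊞)` is a group. -/
theorem stmt16 (q p : ℤ)
    {S Y : ℤ → Type*} [∀ n, AddCommGroup (S n)] [∀ n, AddCommGroup (Y n)]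
    (hY2 : ∀ (n : ℤ) (y : Y n), y + y = 0)
    (dY : ∀ a b : ℤ, a + 1 = b → Y a →+ Y b)
    (cup : ∀ i a b c : ℤ, a + b - i = c → Y a → Y b → S c)
    (hcupl : ∀ (i a b c : ℤ) (h : a + b - i = c) (u u' : Y a) (v : Y b),
      cup i a b c h (u + u') v = cup i a b c h u v + cup i a b c h u' v)
    (hcupr : ∀ (i a b c : ℤ) (h : a + b - i = c) (u : Y a) (v v' : Y b),
      cup i a b c h u (v + v') = cup i a b c h u v + cup i a b c h u v')
    (hcup2 : ∀ (i a b c : ℤ) (h : a + b - i = c) (u : Y a) (v : Y b),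
      cup i a b c h u v + cup i a b c h u v = 0) :
    (∀ x y z : S p × Y (p - q),
      eBoxplus q dY cup p (eBoxplus q dY cup p x y) z
        = eBoxplus q dY cup p x (eBoxplus q dY cup p y z)) ∧
    (∀ x : S p × Y (p - q),
      eBoxplus q dY cup p (0, 0) x = x ∧ eBoxplus q dY cup p x (0, 0) = x) ∧
    (∀ x : S p × Y (p - q),
      eBoxplus q dY cup p x
        (-x.1 + cup (p - 2 * q + 1) (p - q + 1) (p - q) p (by ring)
            (dY (p - q) (p - q + 1) rfl x.2) x.2
          + cup (p - 2 * q) (p - q) (p - q) p (by ring) x.2 x.2, x.2) = (0, 0) ∧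
      eBoxplus q dY cup p
        (-x.1 + cup (p - 2 * q + 1) (p - q + 1) (p - q) p (by ring)
            (dY (p - q) (p - q + 1) rfl x.2) x.2
          + cup (p - 2 * q) (p - q) (p - q) p (by ring) x.2 x.2, x.2) x = (0, 0)) := by
  have hl := eCocycle_add_left q dY p hcupl
  have hr := eCocycle_add_right q dY p hcupr
  refine ⟨?_, fun x ↦ ⟨?_, ?_⟩, fun ⟨s, y⟩ ↦ ⟨?_, ?_⟩⟩ <;>
    simp only [eBoxplus_eq_twistedAdd, add_assoc]
  · exact twistedAdd_assoc _ hl hr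
  · exact zero_twistedAdd _ hl x
  · exact twistedAdd_zero _ hr x
  · exact twistedAdd_mk_neg_add (hY2 _ y) (eCocycle_add_self q dY p hcup2 y y)
  · exact mk_neg_add_twistedAdd (hY2 _ y) (eCocycle_add_self q dY p hcup2 y y)
end

section
/- Fix integers q ≥ 1 and p. In the E-cochain setup (families of abelian groups S n and Y n with every element of Y n 2-torsion, additive differentials d_S : S n →+ S (n+1) and d_Y : Y n →+ Y (n+1) with d_S ∘ d_S = 0 and d_Y ∘ d_Y = 0, and biadditive higher cup products ∪ᵢ : Y a → Y b → S (a+b−i), zero for i < 0, with 2-torsion values, satisfying the Steenrod relation d_S(u ∪ᵢ v) = (d_Y u) ∪ᵢ v + u ∪ᵢ (d_Y v) + u ∪_{i−1} v + v ∪_{i−1} u for all u ∈ Y a, v ∈ Y b, i ∈ ℤ), equip each C̄^n := S n × Y (n−q) with the group law (s₁,y₁) ⊞ (s₂,y₂) := (s₁ + s₂ + (d_Y y₁) ∪_{n−2q+1} y₂ + y₁ ∪_{n−2q} y₂, y₁ + y₂), and define d₀ : C̄^n → C̄^{n+1} by d₀(s,y) := (d_S s + y ∪_{n−2q} (d_Y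 y) + y ∪_{n−2q−1} y, d_Y y). Then: (1) d₀ : C̄^p → C̄^{p+1} is a group homomorphism with respect to ⊞; (2) d₀ ∘ d₀ = 0 as a map C̄^p → C̄^{p+2}; (3) for every z ∈ C̄^p with d₀ z = 0 and every r ∈ C̄^{p−1}, there exists r' ∈ C̄^{p−1} with z ⊞ d₀ r = (d₀ r') ⊞ z; hence the image of d₀ : C̄^{p−1} → C̄^p is a normal subgroup of the kernel of d₀ : C̄^p → C̄^{p+1}. -/
/-- The E-theory differential `d₀ : C̄^n → C̄^m` (with `m = n + 1`):
`d₀ (s, y) = (d_S s + y ∪_{n-2q} (d_Y y) + y ∪_{n-2q-1} y, d_Y y)`. -/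
def eDiff (q : ℤ) {S Y : ℤ → Type*} [∀ n, AddCommGroup (S n)] [∀ n, AddCommGroup (Y n)]
    (dS : ∀ a b : ℤ, a + 1 = b → S a →+ S b)
    (dY : ∀ a b : ℤ, a + 1 = b → Y a →+ Y b)
    (cup : ∀ i a b c : ℤ, a + b - i = c → Y a → Y b → S c)
    (n m : ℤ) (h : n + 1 = m) (x : S n × Y (n - q)) : S m × Y (m - q) :=
  (dS n m h x.1
      + cup (n - 2 * q) (n - q) (n - q + 1) m (by omega) x.2 (dY (n - q) (n - q + 1) rfl x.2)
      + cup (n - 2 * q - 1) (n - q) (n - q) m (by omega) x.2 x.2,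
    dY (n - q) (m - q) (by omega) x.2)

/-- In the E-cochain model: (1) the differential `d₀` is a group homomorphism for `⊞`;
(2) `d₀ ∘ d₀ = 0`; (3) for every `⊞`-cocycle `z` of degree `p` and every `(p-1)`-cochain `r`
there is a `(p-1)`-cochain `r'` with `z ⊞ d₀ r = (d₀ r') ⊞ z`; hence exact E-cochains form a
normal subgroup of the group of E-cocycles. -/
theorem stmt17 (q p : ℤ) (hq : 1 ≤ q)
    {S Y : ℤ → Type*} [∀ n, AddCommGroup (S n)] [∀ n, AddCommGroup (Y n)]
    (hY2 : ∀ (n : ℤ) (y : Y n), y + y = 0)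
    (dS : ∀ a b : ℤ, a + 1 = b → S a →+ S b)
    (dY : ∀ a b : ℤ, a + 1 = b → Y a →+ Y b)
    (hdS2 : ∀ (a b c : ℤ) (h : a + 1 = b) (h' : b + 1 = c) (s : S a), dS b c h' (dS a b h s) = 0)
    (hdY2 : ∀ (a b c : ℤ) (h : a + 1 = b) (h' : b + 1 = c) (y : Y a), dY b c h' (dY a b h y) = 0)
    (cup : ∀ i a b c : ℤ, a + b - i = c → Y a → Y b → S c)
    (hcupl : ∀ (i a b c : ℤ) (h : a + b - i = c) (u u' : Y a) (v : Y b),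
      cup i a b c h (u + u') v = cup i a b c h u v + cup i a b c h u' v)
    (hcupr : ∀ (i a b c : ℤ) (h : a + b - i = c) (u : Y a) (v v' : Y b),
      cup i a b c h u (v + v') = cup i a b c h u v + cup i a b c h u v')
    (hcupneg : ∀ (i a b c : ℤ) (h : a + b - i = c) (u : Y a) (v : Y b),
      i < 0 → cup i a b c h u v = 0)
    (hcup2 : ∀ (i a b c : ℤ) (h : a + b - i = c) (u : Y a) (v : Y b),
      cup i a b c h u v + cup i a b c h u v = 0)
    (hsteenrod : ∀ (i a b c c' : ℤ) (h : a + b - i = c) (hc : c + 1 = c') (u : Y a) (v : Y b),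
      dS c c' hc (cup i a b c h u v) =
        cup i (a + 1) b c' (by omega) (dY a (a + 1) rfl u) v
          + cup i a (b + 1) c' (by omega) u (dY b (b + 1) rfl v)
          + cup (i - 1) a b c' (by omega) u v
          + cup (i - 1) b a c' (by omega) v u) :
    (∀ x₁ x₂ : S p × Y (p - q),
      eDiff q dS dY cup p (p + 1) rfl (eBoxplus q dY cup p x₁ x₂)
        = eBoxplus q dY cup (p + 1)
            (eDiff q dS dY cup p (p + 1) rfl x₁) (eDiff q dS dY cup p (p + 1) rfl x₂)) ∧
    (∀ x : S p × Y (p - q),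
      eDiff q dS dY cup (p + 1) (p + 2) (by ring) (eDiff q dS dY cup p (p + 1) rfl x) = 0) ∧
    (∀ z : S p × Y (p - q), eDiff q dS dY cup p (p + 1) rfl z = 0 →
      ∀ r : S (p - 1) × Y (p - 1 - q), ∃ r' : S (p - 1) × Y (p - 1 - q),
        eBoxplus q dY cup p z (eDiff q dS dY cup (p - 1) p (by ring) r)
          = eBoxplus q dY cup p (eDiff q dS dY cup (p - 1) p (by ring) r') z) := by
  have cup0l : ∀ (i a b c : ℤ) (h : a + b - i = c) (v : Y b), cup i a b c h 0 v = 0 := by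
    intro i a b c h v
    have h2 := hcupl i a b c h 0 0 v
    rw [add_zero] at h2
    exact left_eq_add.mp h2
  have cup0r : ∀ (i a b c : ℤ) (h : a + b - i = c) (u : Y a), cup i a b c h u 0 = 0 := by
    intro i a b c h u
    have h2 := hcupr i a b c h u 0 0
    rw [add_zero] at h2
    exact left_eq_add.mp h2
  have dY_eq_zero : ∀ (a b b' : ℤ) (h : a + 1 = b) (h' : a + 1 = b') (y : Y a),
      dY a b h y = 0 → dY a b' h' y = 0 := by
    intro a b b' h h' y hzz
    have hb : b = b' := by omega
    subst hb; exact hzz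
  have cup_congr : ∀ (i i' a a' b b' c : ℤ) (hi : i = i') (ha : a = a') (hb : b = b')
      (h : a + b - i = c) (h' : a' + b' - i' = c) (u : Y a) (u' : Y a') (v : Y b) (v' : Y b'),
      HEq u u' → HEq v v' → cup i a b c h u v = cup i' a' b' c h' u' v' := by
    intro i i' a a' b b' c hi ha hb h h' u u' v v' hu hv
    subst hi; subst ha; subst hb
    rw [eq_of_heq hu, eq_of_heq hv]
  have dY_heq : ∀ (a b b' : ℤ) (h : a + 1 = b) (h' : a + 1 = b') (y : Y a),
      HEq (dY a b h y) (dY a b' h' y) := by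
    intro a b b' h h' y
    have hb : b = b' := by omega
    subst hb; rfl
  refine ⟨?_, ?_, ?_⟩
  · rintro ⟨s₁, y₁⟩ ⟨s₂, y₂⟩
    simp only [eDiff, eBoxplus, Prod.mk.injEq]
    constructor
    · rw [hdY2 (p - q) (p + 1 - q) (p + 1 - q + 1) (by omega) rfl y₁, cup0l]
      have hT2 : cup (p + 1 - 2 * q) (p + 1 - q) (p + 1 - q) (p + 1) (by omega)
            (dY (p - q) (p + 1 - q) (by omega) y₁) (dY (p - q) (p + 1 - q) (by omega) y₂)
          = cup (p - 2 * q + 1) (p - q + 1) (p - q + 1) (p + 1) (by omega)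
            (dY (p - q) (p - q + 1) rfl y₁) (dY (p - q) (p - q + 1) rfl y₂) :=
        cup_congr _ _ _ _ _ _ _ (by omega) (by omega) (by omega) _ _ _ _ _ _
          (dY_heq _ _ _ _ _ _) (dY_heq _ _ _ _ _ _)
      rw [hT2]
      rw [map_add (dY (p - q) (p - q + 1) rfl) y₁ y₂]
      simp only [map_add, hcupl, hcupr, hsteenrod]
      rw [hdY2 (p - q) (p - q + 1) (p - q + 1 + 1) rfl rfl y₁, cup0l]
      have hT3 : cup (p - 2 * q + 1 - 1) (p - q + 1) (p - q) (p + 1) (by omega)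
            (dY (p - q) (p - q + 1) rfl y₁) y₂
          = cup (p - 2 * q) (p - q + 1) (p - q) (p + 1) (by omega)
            (dY (p - q) (p - q + 1) rfl y₁) y₂ :=
        cup_congr _ _ _ _ _ _ _ (by omega) rfl rfl _ _ _ _ _ _ HEq.rfl HEq.rfl
      rw [hT3]
      rw [← sub_eq_zero]
      abel_nf
      simp only [two_zsmul, two_nsmul, hcup2, add_zero, zero_add]
    · exact map_add (dY (p - q) (p + 1 - q) (by omega)) y₁ y₂
  · rintro ⟨s, y⟩
    simp only [eDiff, Prod.mk_eq_zero]
    constructor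
    · rw [hdY2 (p - q) (p + 1 - q) (p + 1 - q + 1) (by omega) rfl y, cup0r]
      have hT2 : cup (p + 1 - 2 * q - 1) (p + 1 - q) (p + 1 - q) (p + 2) (by omega)
            (dY (p - q) (p + 1 - q) (by omega) y) (dY (p - q) (p + 1 - q) (by omega) y)
          = cup (p - 2 * q) (p - q + 1) (p - q + 1) (p + 2) (by omega)
            (dY (p - q) (p - q + 1) rfl y) (dY (p - q) (p - q + 1) rfl y) :=
        cup_congr _ _ _ _ _ _ _ (by omega) (by omega) (by omega) _ _ _ _ _ _
          (dY_heq _ _ _ _ _ _) (dY_heq _ _ _ _ _ _)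
      rw [hT2]
      simp only [map_add, hsteenrod, hdS2, zero_add]
      rw [hdY2 (p - q) (p - q + 1) (p - q + 1 + 1) rfl rfl y, cup0r]
      abel_nf
      simp only [two_zsmul, two_nsmul, hcup2, add_zero, zero_add]
    · exact hdY2 (p - q) (p + 1 - q) (p + 2 - q) (by omega) (by omega) y
  · rintro ⟨s, y⟩ hz ⟨t, w⟩
    simp only [eDiff, Prod.mk_eq_zero] at hz
    obtain ⟨hs, hy⟩ := hz
    have hy0 : dY (p - q) (p - q + 1) rfl y = 0 :=
      dY_eq_zero _ _ _ _ _ _ hy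
    refine ⟨⟨t + cup (p - 2 * q + 1) (p - q) (p - 1 - q + 1) (p - 1) (by omega) y
        (dY (p - 1 - q) (p - 1 - q + 1) rfl w), w⟩, ?_⟩
    simp only [eDiff, eBoxplus, Prod.mk.injEq]
    constructor
    · rw [hy0, cup0l]
      rw [hdY2 (p - 1 - q) (p - q) (p - q + 1) (by omega) rfl w, cup0l]
      rw [map_add (dS (p - 1) p (by omega))]
      rw [hsteenrod]
      rw [hy0, cup0l]
      rw [hdY2 (p - 1 - q) (p - 1 - q + 1) (p - 1 - q + 1 + 1) rfl rfl w, cup0r]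
      have hT4 : cup (p - 2 * q + 1 - 1) (p - 1 - q + 1) (p - q) p (by omega)
            (dY (p - 1 - q) (p - 1 - q + 1) rfl w) y
          = cup (p - 2 * q) (p - q) (p - q) p (by omega)
            (dY (p - 1 - q) (p - q) (by omega) w) y :=
        cup_congr _ _ _ _ _ _ _ (by omega) (by omega) rfl _ _ _ _ _ _
          (dY_heq _ _ _ _ _ _) HEq.rfl
      have hT5 : cup (p - 2 * q + 1 - 1) (p - q) (p - 1 - q + 1) p (by omega)
            y (dY (p - 1 - q) (p - 1 - q + 1) rfl w)
          = cup (p - 2 * q) (p - q) (p - q) p (by omega)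
            y (dY (p - 1 - q) (p - q) (by omega) w) :=
        cup_congr _ _ _ _ _ _ _ (by omega) rfl (by omega) _ _ _ _ _ _
          HEq.rfl (dY_heq _ _ _ _ _ _)
      rw [hT4, hT5]
      abel_nf
      simp only [two_zsmul, two_nsmul, hcup2, add_zero, zero_add]
    · exact add_comm _ _
end

section
/- Let G be a finite abelian group, M a commutative group written multiplicatively, and B : G → G → M a bimultiplicative alternating pairing (B g g = 1 for all g). Let L, K ≤ G be subgroups with B l l' = 1 for all l, l' ∈ L and B k k' = 1 for all k, k' ∈ K, and suppose there are additive homomorphisms π_L, π_K : G →+ G with π_L g ∈ L, π_K g ∈ K and g = π_L g + π_K g for every g ∈ G (so L and K are transverse Lagrangians giving an internal direct sum decomposition G = L ⊕ K). Define φ(g₁, g₂) := B (π_K g₁) (π_L g₂). Then φ is a normalized 2-cocycle on G refining B: φ(g₁,g₂)·φ(g₁+g₂,g₃) = φ(g₁,g₂+g₃)·φ(g₂,g₃) for all g₁,g₂,g₃, φ(g,0) = φ(0,g) = 1, and φ(g₁,g₂)·φ(g₂,g₁)⁻¹ = B g₁ g₂ for all g₁, g₂. -/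
/-- Given a bimultiplicative alternating pairing `B` on a finite abelian group `G` valued in a
commutative group `M`, and a pair of transverse Lagrangian subgroups `L, K` with projections
`π_L, π_K`, the function `φ (g₁, g₂) = B (π_K g₁) (π_L g₂)` is a normalized 2-cocycle on `G`
refining `B`: it satisfies the cocycle identity, `φ (g, 0) = φ (0, g) = 1`, and its commutator
`φ (g₁, g₂) · (φ (g₂, g₁))⁻¹` equals `B g₁ g₂`. -/
theorem stmt19 {G M : Type*} [AddCommGroup G] [Finite G] [CommGroup M]
    (B : G → G → M)
    (hB1 : ∀ x x' y : G, B (x + x') y = B x y * B x' y)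
    (hB2 : ∀ x y y' : G, B x (y + y') = B x y * B x y')
    (halt : ∀ g : G, B g g = 1)
    (L K : AddSubgroup G)
    (hL : ∀ l ∈ L, ∀ l' ∈ L, B l l' = 1)
    (hK : ∀ k ∈ K, ∀ k' ∈ K, B k k' = 1)
    (πL πK : G →+ G)
    (hπL : ∀ g : G, πL g ∈ L) (hπK : ∀ g : G, πK g ∈ K)
    (hsplit : ∀ g : G, g = πL g + πK g) :
    (∀ g₁ g₂ g₃ : G,
      B (πK g₁) (πL g₂) * B (πK (g₁ + g₂)) (πL g₃)
        = B (πK g₁) (πL (g₂ + g₃)) * B (πK g₂) (πL g₃)) ∧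
    (∀ g : G, B (πK g) (πL 0) = 1 ∧ B (πK 0) (πL g) = 1) ∧
    (∀ g₁ g₂ : G, B (πK g₁) (πL g₂) * (B (πK g₂) (πL g₁))⁻¹ = B g₁ g₂) := by
  have hx0 : ∀ x : G, B x 0 = 1 := fun x => by
    have h := hB2 x 0 0
    rw [add_zero] at h
    exact (left_eq_mul.mp h)
  have h0x : ∀ x : G, B 0 x = 1 := fun x => by
    have h := hB1 0 0 x
    rw [add_zero] at h
    exact (left_eq_mul.mp h)
  have hskew : ∀ x y : G, B x y * B y x = 1 := fun x y => by
    have h := halt (x + y)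
    rw [hB1, hB2, hB2, halt, halt, one_mul, mul_one] at h
    exact h
  refine ⟨fun g₁ g₂ g₃ => ?_, fun g => ⟨?_, ?_⟩, fun g₁ g₂ => ?_⟩
  · rw [map_add, map_add, hB1, hB2]
    simp [mul_assoc, mul_comm, mul_left_comm]
  · rw [map_zero, hx0]
  · rw [map_zero, h0x]
  · calc B (πK g₁) (πL g₂) * (B (πK g₂) (πL g₁))⁻¹
        = B (πL g₁) (πK g₂) * B (πK g₁) (πL g₂) := by
          rw [eq_inv_of_mul_eq_one_left (hskew (πL g₁) (πK g₂))]
          exact mul_comm _ _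
      _ = B g₁ g₂ := by
          conv_rhs => rw [hsplit g₁, hsplit g₂]
          rw [hB1, hB2, hB2, hL _ (hπL g₁) _ (hπL g₂), hK _ (hπK g₁) _ (hπK g₂),
            one_mul, mul_one]
end
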